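/- arXiv:2311.17255 — 9 statements merged into one kernel-verified Lean document; each statement's English description precedes it below -/
import Mathlib

section
/- Let G be a group, and let B and M be abelian groups with a symmetric ℤ-bilinear map c : B × B → M. For any cocycles α ∈ Z^i(G,B) and β ∈ Z^j(G,B), the cochain α ∧_c β − (−1)^{ij} · β ∧_c α ∈ C^{i+j}(G,M) is a coboundary, i.e. it lies in B^{i+j}(G,M); hence the induced cup product on cohomology satisfies [α] ∪_c [β] = (−1)^{ij} [β] ∪_c [α]. -/
/-!
Pass to homogeneous cochains: functions on `G^(n+1)` invariant under left translation, on
which the differential is the alternating sum of the faces. For homogeneous `A` of degree `i`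
and `B` of degree `j = q + 1`, Steenrod's cup-one product
`(A ∪₁ B)(x₀,…,x_{i+q}) = ∑_{a<i} ± c(A(x₀,…,x_a,x_{a+j},…,x_{i+q}), B(x_a,…,x_{a+j}))`
satisfies `d(A ∪₁ B) = ±(dA ∪₁ B) ± (A ∪₁ dB) + A ∪ B − (−1)^{ij} B ∪ A`: the faces of
`A ∪₁ B` cancel in pairs against faces of `dA ∪₁ B` and `A ∪₁ dB`, and what is left over are
the two extreme terms. Bilinearity of `c` pulls `dA = 0` and `dB = 0` out of the pairing, and
symmetry of `c` turns `B ∪ A` into the swapped wedge product.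
-/

namespace Zesting

/-- The inhomogeneous group-cohomology differential (trivial action). -/
def dAdd {G M : Type*} [Monoid G] [AddCommGroup M] (n : ℕ)
    (f : (Fin n → G) → M) : (Fin (n + 1) → G) → M :=
  fun g => f (fun k => g k.succ) +
    ∑ j : Fin (n + 1), ((-1 : ℤ) ^ ((j : ℕ) + 1)) • f (Fin.contractNth j (· * ·) g)

def wedge {G B B' M : Type*} (c : B → B' → M) {i j : ℕ}
    (α : (Fin i → G) → B) (β : (Fin j → G) → B') : (Fin (i + j) → G) → M :=
  fun g => c (α fun k => g (Fin.castAdd j k)) (β fun k => g (Fin.natAdd i k))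

/-- `f ∈ B^n(G,M)`, i.e. `f` is a coboundary (with the convention `B^0 = 0`). -/
def IsCoboundary {G M : Type*} [Monoid G] [AddCommGroup M] :
    (n : ℕ) → ((Fin n → G) → M) → Prop
  | 0, f => f = 0
  | (m + 1), f => ∃ h : (Fin m → G) → M, f = dAdd m h

open Finset

lemma neg_one_pow_smul_of_eq_add_two_mul {M : Type*} [AddCommGroup M] (z : M) {e f : ℕ}
    (t : ℕ) (h : e = f + 2 * t) : ((-1 : ℤ) ^ e) • z = ((-1 : ℤ) ^ f) • z := by
  rw [h, pow_add, pow_mul, neg_one_sq, one_pow, mul_one]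

lemma neg_one_pow_smul_of_eq_add_two_mul_add_one {M : Type*} [AddCommGroup M] (z : M)
    {e f : ℕ} (t : ℕ) (h : e = f + (2 * t + 1)) :
    ((-1 : ℤ) ^ e) • z = -(((-1 : ℤ) ^ f) • z) := by
  rw [h, pow_add, pow_succ, pow_mul, neg_one_sq, one_pow, one_mul, mul_neg_one, neg_smul]

def natSuccAbove (k m : ℕ) : ℕ := if m < k then m else m + 1

def shiftAfter (w a r : ℕ) : ℕ := if r ≤ a then r else r + w

lemma val_succAbove_eq_natSuccAbove {n : ℕ} (k : Fin (n + 1)) (s : Fin n) :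
    (k.succAbove s : ℕ) = natSuccAbove k s := by
  simp only [Fin.succAbove, apply_ite Fin.val, Fin.lt_def, Fin.val_castSucc, Fin.val_succ,
    natSuccAbove]

section Homogeneous

variable {G V M : Type*}

def dHomog [AddCommGroup M] (n : ℕ) (F : (Fin (n + 1) → G) → M) : (Fin (n + 2) → G) → M :=
  fun x => ∑ k : Fin (n + 2), ((-1 : ℤ) ^ (k : ℕ)) • F (fun s => x (k.succAbove s))

lemma sum_neg_one_pow_smul_face_eq_zero {B : Type*} [AddCommGroup B] [AddCommGroup M] {n : ℕ}
    {F : (Fin (n + 1) → G) → B} (hF : dHomog n F = 0) (χ : B →+ M) (z : ℕ → G) :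
    ∑ r ∈ range (n + 2), ((-1 : ℤ) ^ r) • χ (F fun s => z (natSuccAbove r s)) = 0 := by
  have hz := congrArg χ (congrFun hF fun t => z t)
  simp only [dHomog, map_sum, map_zsmul, val_succAbove_eq_natSuccAbove, Pi.zero_apply,
    map_zero] at hz
  rwa [← Fin.sum_univ_eq_sum_range
    (fun r => ((-1 : ℤ) ^ r) • χ (F fun s => z (natSuccAbove r s)))]

variable [Group G]

def homogenize (n : ℕ) (f : (Fin n → G) → V) : (Fin (n + 1) → G) → V :=
  fun x => f fun k => (x k.castSucc)⁻¹ * x k.succ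

def IsInvariant {n : ℕ} (F : (Fin n → G) → V) : Prop :=
  ∀ (s : G) (x : Fin n → G), F (fun k => s * x k) = F x

variable [AddCommGroup M]

lemma isInvariant_homogenize (n : ℕ) (f : (Fin n → G) → V) : IsInvariant (homogenize n f) := by
  intro s x
  simp only [homogenize, mul_inv_rev, mul_assoc, inv_mul_cancel_left]

lemma homogenize_partialProd (n : ℕ) (f : (Fin n → G) → V) (g : Fin n → G) :
    homogenize n f (Fin.partialProd g) = f g :=
  congrArg f (funext (Fin.partialProd_right_inv g))

lemma IsInvariant.dHomog {n : ℕ} {F : (Fin (n + 1) → G) → M} (hF : IsInvariant F) :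
    IsInvariant (dHomog n F) :=
  fun s x => sum_congr rfl fun k _ => by rw [hF s]

lemma IsInvariant.eq_zero_of_partialProd [Zero V] {n : ℕ} {F : (Fin (n + 1) → G) → V}
    (hF : IsInvariant F) (h : ∀ g, F (Fin.partialProd g) = 0) : F = 0 := by
  funext x
  rw [← Fin.partialProd_left_inv x]
  exact (hF _ _).trans (h _)

lemma dAdd_partialProd {n : ℕ} {F : (Fin (n + 1) → G) → M} (hF : IsInvariant F)
    (g : Fin (n + 1) → G) :
    dAdd n (fun g => F (Fin.partialProd g)) g = dHomog n F (Fin.partialProd g) := by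
  rw [dAdd, dHomog, Fin.sum_univ_succ (n := n + 1)]
  congr 1
  · simp only [Fin.val_zero, pow_zero, one_smul, Fin.succAbove_zero, Fin.partialProd_succ']
    exact (hF _ _).symm
  · refine sum_congr rfl fun j _ => ?_
    rw [Fin.val_succ, Fin.partialProd_contractNth]
    rfl

lemma dHomog_homogenize_eq_zero {n : ℕ} {f : (Fin n → G) → M} (hf : dAdd n f = 0) :
    dHomog n (homogenize n f) = 0 :=
  (isInvariant_homogenize n f).dHomog.eq_zero_of_partialProd fun g => by
    rw [← dAdd_partialProd (isInvariant_homogenize n f)]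
    simp only [homogenize_partialProd, hf, Pi.zero_apply]

lemma isCoboundary_succ_of_eq_dHomog {n : ℕ} {t : (Fin (n + 1) → G) → M}
    {W : (Fin (n + 1) → G) → M} (hW : IsInvariant W)
    (h : ∀ g, t g = dHomog n W (Fin.partialProd g)) : IsCoboundary (n + 1) t :=
  ⟨fun g => W (Fin.partialProd g), funext fun g => (h g).trans (dAdd_partialProd hW g).symm⟩

end Homogeneous

section CupOneFormula

/- `atom f g` stands for `c(A(x_{f 0},…,x_{f i}), B(x_{g 0},…,x_{g (q+1)}))` with `A` of degree
`i` and `B` of degree `q + 1`. The five families below are the terms of `d(A ∪₁ B)`,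
`dA ∪₁ B`, `A ∪₁ dB`, `A ∪ B` and `−(−1)^{i(q+1)} B ∪ A`; all that the formula relating
them uses about `atom` is that it reads `f` and `g` only on `[0, i]` and `[0, q + 1]`. -/

variable {M : Type*} [AddCommGroup M] (atom : (ℕ → ℕ) → (ℕ → ℕ) → M) (i q : ℕ)

def dCupOneTerm (k a : ℕ) : M :=
  ((-1 : ℤ) ^ (k + (i * (q + 1) + (a + 1) * (q + 2)))) •
    atom (fun r => natSuccAbove k (shiftAfter q a r)) (fun m => natSuccAbove k (a + m))

def leftCupOneTerm (a r : ℕ) : M :=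
  ((-1 : ℤ) ^ ((i + 1) * (q + 1) + (a + 1) * (q + 2) + 1 + r)) •
    atom (fun s => shiftAfter q a (natSuccAbove r s)) (fun m => a + m)

def rightCupOneTerm (a r : ℕ) : M :=
  ((-1 : ℤ) ^ ((i + 1) * (q + 1) + 1 + a * (q + 1) + r)) •
    atom (fun s => shiftAfter (q + 1) a s) (fun m => a + natSuccAbove r m)

def cupTerm : M :=
  atom (fun r => r) (fun m => i + m)

def swapCupTerm : M :=
  ((-1 : ℤ) ^ (i * (q + 1) + 1)) • atom (fun r => q + 1 + r) (fun m => m)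

variable (hatom : ∀ f f' g g' : ℕ → ℕ, (∀ r ≤ i, f r = f' r) →
  (∀ m ≤ q + 1, g m = g' m) → atom f g = atom f' g')

include hatom

/- Face `r` of the `a`-th term of `dA ∪₁ B` is a face of `A ∪₁ B` when `r < a` or `r ≥ a + 2`,
the inner faces of `A ∪₁ dB` give the remaining faces of `A ∪₁ B`, and the faces `r = a` and
`r = a + 1` cancel the outer faces of `A ∪₁ dB`, except for the two extreme terms. -/

lemma sum_leftCupOneTerm_below :
    ∑ a ∈ range (i + 1), ∑ r ∈ range a, leftCupOneTerm atom i q a r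
      = ∑ a ∈ range i, ∑ k ∈ range (a + 1), dCupOneTerm atom i q k a := by
  rw [sum_range_succ']
  simp only [range_zero, sum_empty, add_zero]
  refine sum_congr rfl fun a ha => sum_congr rfl fun k hk => ?_
  rw [mem_range] at ha hk
  unfold leftCupOneTerm dCupOneTerm
  rw [hatom _ (fun r => natSuccAbove k (shiftAfter q a r)) _ (fun m => natSuccAbove k (a + m))
      (fun r hr => by simp only [natSuccAbove, shiftAfter]; split_ifs <;> omega)
      (fun m hm => by simp only [natSuccAbove]; split_ifs <;> omega)]
  exact neg_one_pow_smul_of_eq_add_two_mul _ (q + 2) (by ring)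

lemma sum_leftCupOneTerm_above :
    ∑ a ∈ range (i + 1), ∑ r ∈ Ico (a + 2) (i + 2), leftCupOneTerm atom i q a r
      = ∑ a ∈ range i, ∑ k ∈ Ico (a + q + 2) (i + q + 2), dCupOneTerm atom i q k a := by
  rw [sum_range_succ]
  simp only [Ico_self, sum_empty, add_zero]
  refine sum_congr rfl fun a ha => ?_
  rw [mem_range] at ha
  rw [sum_Ico_eq_sum_range, sum_Ico_eq_sum_range,
    show i + 2 - (a + 2) = i - a by omega, show i + q + 2 - (a + q + 2) = i - a by omega]
  refine sum_congr rfl fun t ht => ?_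
  rw [mem_range] at ht
  unfold leftCupOneTerm dCupOneTerm
  rw [hatom _ (fun r => natSuccAbove (a + q + 2 + t) (shiftAfter q a r)) _
      (fun m => natSuccAbove (a + q + 2 + t) (a + m))
      (fun r hr => by simp only [natSuccAbove, shiftAfter]; split_ifs <;> omega)
      (fun m hm => by simp only [natSuccAbove]; split_ifs <;> omega)]
  exact neg_one_pow_smul_of_eq_add_two_mul _ 1 (by ring)

lemma sum_rightCupOneTerm_middle :
    ∑ a ∈ range i, ∑ t ∈ range (q + 1), rightCupOneTerm atom i q a (t + 1)
      = ∑ a ∈ range i, ∑ k ∈ Ico (a + 1) (a + q + 2), dCupOneTerm atom i q k a := by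
  refine sum_congr rfl fun a ha => ?_
  rw [sum_Ico_eq_sum_range, show a + q + 2 - (a + 1) = q + 1 by omega]
  refine sum_congr rfl fun t ht => ?_
  rw [mem_range] at ht
  unfold rightCupOneTerm dCupOneTerm
  rw [hatom (fun r => natSuccAbove (a + 1 + t) (shiftAfter q a r)) (shiftAfter (q + 1) a)
      (fun m => natSuccAbove (a + 1 + t) (a + m)) (fun m => a + natSuccAbove (t + 1) m)
      (fun r hr => by simp only [natSuccAbove, shiftAfter]; split_ifs <;> omega)
      (fun m hm => by simp only [natSuccAbove]; split_ifs <;> omega)]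
  exact (neg_one_pow_smul_of_eq_add_two_mul _ a (by ring)).symm

lemma sum_leftCupOneTerm_diag :
    ∑ a ∈ range (i + 1), leftCupOneTerm atom i q a a
      = -(∑ a ∈ range i, rightCupOneTerm atom i q a 0 + swapCupTerm atom i q) := by
  have hface : ∀ a < i,
      leftCupOneTerm atom i q (a + 1) (a + 1) = -rightCupOneTerm atom i q a 0 := by
    intro a ha
    unfold leftCupOneTerm rightCupOneTerm
    rw [hatom _ (shiftAfter (q + 1) a) _ (fun m => a + natSuccAbove 0 m)
        (fun r hr => by simp only [natSuccAbove, shiftAfter]; split_ifs <;> omega)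
        (fun m hm => by simp only [natSuccAbove]; split_ifs <;> omega)]
    exact neg_one_pow_smul_of_eq_add_two_mul_add_one _ (a + q + 2) (by ring)
  have hfirst : leftCupOneTerm atom i q 0 0 = -swapCupTerm atom i q := by
    unfold leftCupOneTerm swapCupTerm
    rw [hatom _ (fun r => q + 1 + r) _ (fun m => m)
        (fun r hr => by simp only [natSuccAbove, shiftAfter]; split_ifs <;> omega)
        (fun m hm => by omega)]
    exact neg_one_pow_smul_of_eq_add_two_mul_add_one _ (q + 1) (by ring)
  rw [sum_range_succ', sum_congr rfl fun a ha => hface a (mem_range.mp ha), hfirst,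
    sum_neg_distrib, neg_add]

lemma sum_leftCupOneTerm_superdiag :
    ∑ a ∈ range (i + 1), leftCupOneTerm atom i q a (a + 1)
      = -(∑ a ∈ range i, rightCupOneTerm atom i q a (q + 2) + cupTerm atom i) := by
  have hface : ∀ a < i,
      leftCupOneTerm atom i q a (a + 1) = -rightCupOneTerm atom i q a (q + 2) := by
    intro a ha
    unfold leftCupOneTerm rightCupOneTerm
    rw [hatom _ (shiftAfter (q + 1) a) _ (fun m => a + natSuccAbove (q + 2) m)
        (fun r hr => by simp only [natSuccAbove, shiftAfter]; split_ifs <;> omega)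
        (fun m hm => by simp only [natSuccAbove]; split_ifs <;> omega)]
    exact neg_one_pow_smul_of_eq_add_two_mul_add_one _ a (by ring)
  have hlast : leftCupOneTerm atom i q i (i + 1) = -cupTerm atom i := by
    unfold leftCupOneTerm cupTerm
    rw [hatom _ (fun r => r) _ (fun m => i + m)
        (fun r hr => by simp only [natSuccAbove, shiftAfter]; split_ifs <;> omega)
        (fun m hm => rfl),
      neg_one_pow_smul_of_eq_add_two_mul_add_one _ (f := 0) ((i + 1) * (q + 1) + i + 1)
        (by ring), pow_zero, one_smul]
  rw [sum_range_succ, sum_congr rfl fun a ha => hface a (mem_range.mp ha), hlast,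
    sum_neg_distrib, neg_add]

theorem sum_dCupOneTerm :
    ∑ k ∈ range (i + q + 2), ∑ a ∈ range i, dCupOneTerm atom i q k a
      = ∑ a ∈ range (i + 1), ∑ r ∈ range (i + 2), leftCupOneTerm atom i q a r
        + ∑ a ∈ range i, ∑ r ∈ range (q + 3), rightCupOneTerm atom i q a r
        + cupTerm atom i + swapCupTerm atom i q := by
  have hT : ∑ k ∈ range (i + q + 2), ∑ a ∈ range i, dCupOneTerm atom i q k a
      = ∑ a ∈ range i, ∑ k ∈ range (a + 1), dCupOneTerm atom i q k a
        + ∑ a ∈ range i, ∑ k ∈ Ico (a + 1) (a + q + 2), dCupOneTerm atom i q k a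
        + ∑ a ∈ range i, ∑ k ∈ Ico (a + q + 2) (i + q + 2), dCupOneTerm atom i q k a := by
    rw [sum_comm, ← sum_add_distrib, ← sum_add_distrib]
    refine sum_congr rfl fun a ha => ?_
    rw [mem_range] at ha
    rw [← sum_range_add_sum_Ico _ (show a + 1 ≤ i + q + 2 by omega),
      ← sum_Ico_consecutive _ (show a + 1 ≤ a + q + 2 by omega)
        (show a + q + 2 ≤ i + q + 2 by omega)]
    exact (add_assoc _ _ _).symm
  have hU : ∑ a ∈ range (i + 1), ∑ r ∈ range (i + 2), leftCupOneTerm atom i q a r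
      = ∑ a ∈ range (i + 1), ∑ r ∈ range a, leftCupOneTerm atom i q a r
        + ∑ a ∈ range (i + 1), leftCupOneTerm atom i q a a
        + ∑ a ∈ range (i + 1), leftCupOneTerm atom i q a (a + 1)
        + ∑ a ∈ range (i + 1), ∑ r ∈ Ico (a + 2) (i + 2), leftCupOneTerm atom i q a r := by
    simp only [← sum_add_distrib]
    refine sum_congr rfl fun a ha => ?_
    rw [mem_range] at ha
    rw [← sum_range_add_sum_Ico _ (show a ≤ i + 2 by omega),
      sum_eq_sum_Ico_succ_bot (show a < i + 2 by omega),
      sum_eq_sum_Ico_succ_bot (show a + 1 < i + 2 by omega)]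
    abel
  have hV : ∑ a ∈ range i, ∑ r ∈ range (q + 3), rightCupOneTerm atom i q a r
      = ∑ a ∈ range i, rightCupOneTerm atom i q a 0
        + ∑ a ∈ range i, ∑ t ∈ range (q + 1), rightCupOneTerm atom i q a (t + 1)
        + ∑ a ∈ range i, rightCupOneTerm atom i q a (q + 2) := by
    simp only [← sum_add_distrib]
    refine sum_congr rfl fun a _ => ?_
    rw [sum_range_succ, sum_range_succ' _ (q + 1)]
    abel
  rw [hT, hU, hV, sum_leftCupOneTerm_below atom i q hatom,
    sum_leftCupOneTerm_above atom i q hatom, sum_rightCupOneTerm_middle atom i q hatom,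
    sum_leftCupOneTerm_diag atom i q hatom, sum_leftCupOneTerm_superdiag atom i q hatom]
  abel

end CupOneFormula

section CupOne

variable {G B M : Type*}

/- Extending a tuple to a sequence keeps the index arithmetic of the cup-one product in `ℕ`;
only the entries up to `n` are ever read. -/
def clamp {n : ℕ} (y : Fin (n + 1) → G) : ℕ → G :=
  fun m => y ⟨min m n, Nat.lt_succ_of_le (Nat.min_le_right _ _)⟩

lemma clamp_succAbove {n : ℕ} (y : Fin (n + 2) → G) (k : Fin (n + 2)) (m : ℕ) (hm : m ≤ n) :
    clamp (fun s => y (k.succAbove s)) m = clamp y (natSuccAbove k m) := by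
  simp only [clamp]
  congr 1
  ext
  rw [val_succAbove_eq_natSuccAbove]
  simp only [natSuccAbove]
  split_ifs <;> omega

variable (c : B → B → M) {i q : ℕ} (φ : (Fin (i + 1) → G) → B) (ψ : (Fin (q + 2) → G) → B)

def cupAtom (x : ℕ → G) (f g : ℕ → ℕ) : M :=
  c (φ fun r => x (f r)) (ψ fun m => x (g m))

lemma cupAtom_congr (x : ℕ → G) (f f' g g' : ℕ → ℕ) (hf : ∀ r ≤ i, f r = f' r)
    (hg : ∀ m ≤ q + 1, g m = g' m) : cupAtom c φ ψ x f g = cupAtom c φ ψ x f' g' := by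
  have ef : (fun r : Fin (i + 1) => x (f r)) = fun r : Fin (i + 1) => x (f' r) :=
    funext fun r => by rw [hf r (Nat.lt_succ_iff.mp r.2)]
  have eg : (fun m : Fin (q + 2) => x (g m)) = fun m : Fin (q + 2) => x (g' m) :=
    funext fun m => by rw [hg m (Nat.lt_succ_iff.mp m.2)]
  rw [cupAtom, ef, eg, cupAtom]

variable [AddCommGroup M]

def cupOne (x : ℕ → G) : M :=
  ∑ a ∈ range i, ((-1 : ℤ) ^ (i * (q + 1) + (a + 1) * (q + 2))) •
    cupAtom c φ ψ x (shiftAfter q a) (a + ·)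

lemma cupOne_congr {x x' : ℕ → G} (h : ∀ m ≤ i + q, x m = x' m) :
    cupOne c φ ψ x = cupOne c φ ψ x' := by
  refine sum_congr rfl fun a ha => ?_
  rw [mem_range] at ha
  have ef : (fun r : Fin (i + 1) => x (shiftAfter q a r))
      = fun r : Fin (i + 1) => x' (shiftAfter q a r) :=
    funext fun r => h _ (by have := r.2; simp only [shiftAfter]; split_ifs <;> omega)
  have eg : (fun m : Fin (q + 2) => x (a + m)) = fun m : Fin (q + 2) => x' (a + m) :=
    funext fun m => h _ (by have := m.2; omega)
  simp only [cupAtom, ef, eg]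

def cupOneCochain : (Fin (i + q + 1) → G) → M :=
  fun y => cupOne c φ ψ (clamp y)

lemma dHomog_cupOneCochain (y : Fin (i + q + 2) → G) :
    dHomog (i + q) (cupOneCochain c φ ψ) y
      = ∑ k ∈ range (i + q + 2), ∑ a ∈ range i,
          dCupOneTerm (cupAtom c φ ψ (clamp y)) i q k a := by
  rw [dHomog, ← Fin.sum_univ_eq_sum_range]
  refine sum_congr rfl fun k _ => ?_
  rw [cupOneCochain, cupOne_congr c φ ψ (clamp_succAbove y k), cupOne, smul_sum]
  refine sum_congr rfl fun a _ => ?_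
  rw [smul_smul, ← pow_add]
  rfl

lemma isInvariant_cupOneCochain [Group G] (hφ : IsInvariant φ) (hψ : IsInvariant ψ) :
    IsInvariant (cupOneCochain c φ ψ) :=
  fun s y => by simp only [cupOneCochain, cupOne, cupAtom, clamp, hφ s, hψ s]

variable [AddCommGroup B]

lemma sum_leftCupOneTerm_eq_zero (hc₁ : ∀ b₁ b₂ b₃, c (b₁ + b₂) b₃ = c b₁ b₃ + c b₂ b₃)
    (hφ : dHomog i φ = 0) (x : ℕ → G) :
    ∑ a ∈ range (i + 1), ∑ r ∈ range (i + 2), leftCupOneTerm (cupAtom c φ ψ x) i q a r = 0 := by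
  refine sum_eq_zero fun a _ => ?_
  let χ : B →+ M := AddMonoidHom.mk' (c · (ψ fun m => x (a + m))) (hc₁ · · _)
  calc ∑ r ∈ range (i + 2), leftCupOneTerm (cupAtom c φ ψ x) i q a r
      = ((-1 : ℤ) ^ ((i + 1) * (q + 1) + (a + 1) * (q + 2) + 1)) •
          ∑ r ∈ range (i + 2), ((-1 : ℤ) ^ r) •
            χ (φ fun s => x (shiftAfter q a (natSuccAbove r s))) := by
        rw [smul_sum]
        refine sum_congr rfl fun r _ => ?_
        rw [leftCupOneTerm, pow_add, mul_smul]
        rfl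
    _ = 0 := by
        have h := sum_neg_one_pow_smul_face_eq_zero hφ χ fun t => x (shiftAfter q a t)
        beta_reduce at h
        rw [h, smul_zero]

lemma sum_rightCupOneTerm_eq_zero (hc₂ : ∀ b₁ b₂ b₃, c b₁ (b₂ + b₃) = c b₁ b₂ + c b₁ b₃)
    (hψ : dHomog (q + 1) ψ = 0) (x : ℕ → G) :
    ∑ a ∈ range i, ∑ r ∈ range (q + 3), rightCupOneTerm (cupAtom c φ ψ x) i q a r = 0 := by
  refine sum_eq_zero fun a _ => ?_
  let χ : B →+ M := AddMonoidHom.mk' (c (φ fun s => x (shiftAfter (q + 1) a s))) (hc₂ _)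
  calc ∑ r ∈ range (q + 3), rightCupOneTerm (cupAtom c φ ψ x) i q a r
      = ((-1 : ℤ) ^ ((i + 1) * (q + 1) + 1 + a * (q + 1))) •
          ∑ r ∈ range (q + 3), ((-1 : ℤ) ^ r) •
            χ (ψ fun m => x (a + natSuccAbove r m)) := by
        rw [smul_sum]
        refine sum_congr rfl fun r _ => ?_
        rw [rightCupOneTerm, pow_add, mul_smul]
        rfl
    _ = 0 := by
        have h := sum_neg_one_pow_smul_face_eq_zero hψ χ fun t => x (a + t)
        beta_reduce at h
        rw [h, smul_zero]

theorem dHomog_cupOneCochain_eq (hc₁ : ∀ b₁ b₂ b₃, c (b₁ + b₂) b₃ = c b₁ b₃ + c b₂ b₃)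
    (hc₂ : ∀ b₁ b₂ b₃, c b₁ (b₂ + b₃) = c b₁ b₂ + c b₁ b₃)
    (hφ : dHomog i φ = 0) (hψ : dHomog (q + 1) ψ = 0) (y : Fin (i + q + 2) → G) :
    dHomog (i + q) (cupOneCochain c φ ψ) y
      = cupTerm (cupAtom c φ ψ (clamp y)) i + swapCupTerm (cupAtom c φ ψ (clamp y)) i q := by
  rw [dHomog_cupOneCochain, sum_dCupOneTerm _ i q (cupAtom_congr c φ ψ _),
    sum_leftCupOneTerm_eq_zero c φ ψ hc₁ hφ, sum_rightCupOneTerm_eq_zero c φ ψ hc₂ hψ,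
    zero_add, zero_add]

end CupOne

lemma isCoboundary_zero {G M : Type*} [Monoid G] [AddCommGroup M] (n : ℕ) :
    IsCoboundary (G := G) n (0 : (Fin n → G) → M) := by
  cases n with
  | zero => rfl
  | succ m => exact ⟨0, funext fun g => by simp [dAdd]⟩

section Inhomogeneous

variable {G B M : Type*} [AddCommGroup M] (c : B → B → M)

lemma wedge_sub_swap_wedge_of_right_zero (hsym : ∀ b₁ b₂, c b₁ b₂ = c b₂ b₁) {i : ℕ}
    (α : (Fin i → G) → B) (β : (Fin 0 → G) → B) :
    (fun g => wedge c α β g - ((-1 : ℤ) ^ (i * 0)) •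
      wedge c β α (fun k => g (Fin.cast (Nat.add_comm 0 i) k))) = 0 := by
  funext g
  rw [Pi.zero_apply, mul_zero, pow_zero, one_smul, sub_eq_zero, wedge, wedge, hsym]
  congr 2
  · exact Subsingleton.elim _ _
  · exact funext fun k => congrArg g (Fin.ext (Nat.zero_add k).symm)

variable [Group G]

lemma homogenize_clamp_partialProd {V : Type*} {N n : ℕ} (f : (Fin n → G) → V)
    (g : Fin N → G) (o : ℕ) (h : o + n ≤ N) :
    homogenize n f (fun r => clamp (Fin.partialProd g) (o + r))
      = f fun k => g ⟨o + k, by omega⟩ := by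
  refine congrArg f (funext fun k => ?_)
  have hk : o + k < N := by omega
  have e₀ : min (o + k) N = o + k := min_eq_left hk.le
  have e₁ : min (o + (k + 1)) N = o + k + 1 := by omega
  simp only [clamp, Fin.val_castSucc, Fin.val_succ, e₀, e₁]
  exact Fin.partialProd_right_inv g ⟨o + k, hk⟩

lemma cupTerm_add_swapCupTerm_partialProd (hsym : ∀ b₁ b₂, c b₁ b₂ = c b₂ b₁) {i q : ℕ}
    (α : (Fin i → G) → B) (β : (Fin (q + 1) → G) → B) (g : Fin (i + (q + 1)) → G) :
    cupTerm (cupAtom c (homogenize i α) (homogenize (q + 1) β) (clamp (Fin.partialProd g))) i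
        + swapCupTerm (cupAtom c (homogenize i α) (homogenize (q + 1) β)
            (clamp (Fin.partialProd g))) i q
      = wedge c α β g - ((-1 : ℤ) ^ (i * (q + 1))) •
          wedge c β α (fun k => g (Fin.cast (Nat.add_comm (q + 1) i) k)) := by
  have hα₀ := homogenize_clamp_partialProd α g 0 (by omega)
  have hα₁ := homogenize_clamp_partialProd α g (q + 1) (by omega)
  have hβ₀ := homogenize_clamp_partialProd β g 0 (by omega)
  have hβ₁ := homogenize_clamp_partialProd β g i le_rfl
  simp only [zero_add] at hα₀ hβ₀
  simp only [cupTerm, swapCupTerm, cupAtom, hα₀, hα₁, hβ₀, hβ₁, wedge, hsym (β _),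
    pow_succ, mul_neg_one, neg_smul, sub_eq_add_neg]
  rfl

end Inhomogeneous

/-- If `c : B × B → M` is a symmetric ℤ-bilinear pairing and
`α ∈ Z^i(G,B)`, `β ∈ Z^j(G,B)` are cocycles, then
`α ∧_c β − (−1)^{ij} β ∧_c α ∈ B^{i+j}(G,M)`; hence on cohomology
`[α] ∪_c [β] = (−1)^{ij} [β] ∪_c [α]`. -/
theorem cup_graded_comm {G B M : Type*} [Group G] [AddCommGroup B] [AddCommGroup M]
    (c : B → B → M)
    (hc₁ : ∀ b₁ b₂ b₃, c (b₁ + b₂) b₃ = c b₁ b₃ + c b₂ b₃)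
    (hc₂ : ∀ b₁ b₂ b₃, c b₁ (b₂ + b₃) = c b₁ b₂ + c b₁ b₃)
    (hsym : ∀ b₁ b₂, c b₁ b₂ = c b₂ b₁)
    {i j : ℕ} (α : (Fin i → G) → B) (β : (Fin j → G) → B)
    (hα : dAdd i α = 0) (hβ : dAdd j β = 0) :
    IsCoboundary (i + j) (fun g =>
      wedge c α β g -
        ((-1 : ℤ) ^ (i * j)) •
          wedge c β α (fun k => g (Fin.cast (Nat.add_comm j i) k))) := by
  rcases j with _ | q
  · rw [wedge_sub_swap_wedge_of_right_zero c hsym α β]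
    exact isCoboundary_zero _
  · refine isCoboundary_succ_of_eq_dHomog (n := i + q)
      (isInvariant_cupOneCochain c _ _ (isInvariant_homogenize i α)
        (isInvariant_homogenize (q + 1) β)) fun g => ?_
    rw [dHomog_cupOneCochain_eq c _ _ hc₁ hc₂ (dHomog_homogenize_eq_zero hα)
      (dHomog_homogenize_eq_zero hβ), cupTerm_add_swapCupTerm_partialProd c hsym]

end Zesting
end

section
/- Let B be an abelian group and N ≥ 1 an integer. For x ∈ ℤ/N let x̄ ∈ {0,…,N−1} denote its integer representative. For ν ∈ B define t_ν(x,y) = x̄ȳ·ν and ω_ν(x,y,z) = x̄N·ν if ȳ + z̄ ≥ N and ω_ν(x,y,z) = 0 otherwise. Then the map sending ν to the class of (ω_ν, t_ν) is a group isomorphism from {ν ∈ B : N²ν = 0 and 2Nν = 0} onto H³_ab(ℤ/N, B); in particular, for each ν with N²ν = 2Nν = 0 the pair (ω_ν, t_ν) belongs to Z³_ab(ℤ/N, B) and its associated quadratic form is x ↦ x̄²·ν. -/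
/-!
An abelian 3-cocycle `(ω, t)` on `ℤ/N` is determined up to coboundaries by `ν = t(1,1)`.
The quadratic form `q(x) = t(x,x)` satisfies `q(x + y) = q(x) + q(y) + b(x,y)` with
`b(x,y) = t(x,y) + t(y,x)` additive in `x`, so `N • 1 = 0` forces `N²ν = 0` and `2Nν = 0`.
Conversely, if `t(1,1) = 0`, summing the cocycle identity over `ℤ/N` shows that
`z ↦ ∑ₓ ω(1,x,z)` is additive, and the hexagon identity gives it the value `N • t(1,1) = 0`
at `1`. Hence the primitive `κ(x,z) = ω(0,0,z) - ∑_{i < x̄} ω(1,i,z)` is `N`-periodic in `x̄`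
and `∂κ` has first component `ω`; the remaining cocycle has `ω = 0`, so its `t` is
biadditive and vanishes since `t(1,1) = 0`. That `(ω_ν, t_ν)` is a cocycle comes from the
carry 2-cocycle `c(x,y) = (x̄ + ȳ - (x + y)‾) / N`.
-/

/-!
Statement 2: `H³_ab(ℤ/N, B) ≅ {ν ∈ B : N²ν = 0, 2Nν = 0}`, via
`ν ↦ [(ω_ν, t_ν)]` with `t_ν(x,y) = x̄ȳ·ν` and
`ω_ν(x,y,z) = x̄N·ν` if `ȳ + z̄ ≥ N`, `0` otherwise.
-/

namespace Stmt2

variable (A B : Type*) [AddCommGroup A] [AddCommGroup B]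

/-- The group of pairs `(ω, t) ∈ C³(A,B) ⊕ C²(A,B)`. -/
abbrev P := (A → A → A → B) × (A → A → B)

/- Elementary "shape" homomorphisms used to build the cocycle conditions. -/
def c1 : P A B →+ (A → A → A → A → B) :=
  AddMonoidHom.mk' (fun p x y z w => p.1 y z w) (fun _ _ => rfl)
def c2 : P A B →+ (A → A → A → A → B) :=
  AddMonoidHom.mk' (fun p x y z w => p.1 (x + y) z w) (fun _ _ => rfl)
def c3 : P A B →+ (A → A → A → A → B) :=
  AddMonoidHom.mk' (fun p x y z w => p.1 x (y + z) w) (fun _ _ => rfl)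
def c4 : P A B →+ (A → A → A → A → B) :=
  AddMonoidHom.mk' (fun p x y z w => p.1 x y (z + w)) (fun _ _ => rfl)
def c5 : P A B →+ (A → A → A → A → B) :=
  AddMonoidHom.mk' (fun p x y z w => p.1 x y z) (fun _ _ => rfl)

/-- `L1 p = d³(p.1)`: the condition `L1 p = 0` says `ω = p.1` is a 3-cocycle. -/
def L1 : P A B →+ (A → A → A → A → B) := c1 A B - c2 A B + c3 A B - c4 A B + c5 A B

def s1 : P A B →+ (A → A → A → B) :=
  AddMonoidHom.mk' (fun p x y z => p.2 y z) (fun _ _ => rfl)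
def s2 : P A B →+ (A → A → A → B) :=
  AddMonoidHom.mk' (fun p x y z => p.2 (x + y) z) (fun _ _ => rfl)
def s3 : P A B →+ (A → A → A → B) :=
  AddMonoidHom.mk' (fun p x y z => p.2 x z) (fun _ _ => rfl)
def s4 : P A B →+ (A → A → A → B) :=
  AddMonoidHom.mk' (fun p x y z => p.1 x y z) (fun _ _ => rfl)
def s5 : P A B →+ (A → A → A → B) :=
  AddMonoidHom.mk' (fun p x y z => p.1 x z y) (fun _ _ => rfl)
def s6 : P A B →+ (A → A → A → B) :=
  AddMonoidHom.mk' (fun p x y z => p.1 z x y) (fun _ _ => rfl)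

/-- First hexagon condition:
`t(y,z) − t(x+y,z) + t(x,z) + ω(x,y,z) − ω(x,z,y) + ω(z,x,y) = 0`. -/
def L2 : P A B →+ (A → A → A → B) := s1 A B - s2 A B + s3 A B + s4 A B - s5 A B + s6 A B

def u1 : P A B →+ (A → A → A → B) :=
  AddMonoidHom.mk' (fun p x y _z => p.2 x y) (fun _ _ => rfl)
def u2 : P A B →+ (A → A → A → B) :=
  AddMonoidHom.mk' (fun p x y z => p.2 x (y + z)) (fun _ _ => rfl)
def u5 : P A B →+ (A → A → A → B) :=
  AddMonoidHom.mk' (fun p x y z => p.1 y x z) (fun _ _ => rfl)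
def u6 : P A B →+ (A → A → A → B) :=
  AddMonoidHom.mk' (fun p x y z => p.1 y z x) (fun _ _ => rfl)

/-- Second hexagon condition:
`t(x,y) − t(x,y+z) + t(x,z) − ω(x,y,z) + ω(y,x,z) − ω(y,z,x) = 0`. -/
def L3 : P A B →+ (A → A → A → B) := u1 A B - u2 A B + s3 A B - s4 A B + u5 A B - u6 A B

/-- The group `Z³_ab(A,B)` of abelian 3-cocycles. -/
def Zab3 : AddSubgroup (P A B) := (L1 A B).ker ⊓ (L2 A B).ker ⊓ (L3 A B).ker

def f1 : (A → A → B) →+ (A → A → A → B) :=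
  AddMonoidHom.mk' (fun κ _x y z => κ y z) (fun _ _ => rfl)
def f2 : (A → A → B) →+ (A → A → A → B) :=
  AddMonoidHom.mk' (fun κ x y z => κ (x + y) z) (fun _ _ => rfl)
def f3 : (A → A → B) →+ (A → A → A → B) :=
  AddMonoidHom.mk' (fun κ x y z => κ x (y + z)) (fun _ _ => rfl)
def f4 : (A → A → B) →+ (A → A → A → B) :=
  AddMonoidHom.mk' (fun κ x y _z => κ x y) (fun _ _ => rfl)
def g1 : (A → A → B) →+ (A → A → B) :=
  AddMonoidHom.mk' (fun κ x y => κ y x) (fun _ _ => rfl)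
def g2 : (A → A → B) →+ (A → A → B) :=
  AddMonoidHom.mk' (fun κ x y => κ x y) (fun _ _ => rfl)

/-- The differential `∂ : C²_ab(A,B) → Z³_ab(A,B)` (as a map into pairs),
`∂(κ)(x,y,z) = κ(y,z) − κ(x+y,z) + κ(x,y+z) − κ(x,y)`,
`∂(κ)(x,y) = κ(y,x) − κ(x,y)`. -/
def bd : (A → A → B) →+ P A B := (f1 A B - f2 A B + f3 A B - f4 A B).prod (g1 A B - g2 A B)

/-- The abelian cohomology group `H³_ab(A,B) = Z³_ab(A,B)/Im ∂`. -/
abbrev Hab3 := Zab3 A B ⧸ ((bd A B).range.addSubgroupOf (Zab3 A B))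

/-- The subgroup `{ν ∈ B : N²ν = 0 and 2Nν = 0}`. -/
def nuSub (N : ℕ) : AddSubgroup B where
  carrier := {ν : B | ((N : ℤ) ^ 2) • ν = 0 ∧ ((2 * N : ℤ)) • ν = 0}
  zero_mem' := by simp
  add_mem' := by
    intro a b ha hb
    simp only [Set.mem_setOf_eq] at *
    exact ⟨by rw [smul_add, ha.1, hb.1, add_zero], by rw [smul_add, ha.2, hb.2, add_zero]⟩
  neg_mem' := by
    intro a ha
    simp only [Set.mem_setOf_eq] at *
    exact ⟨by rw [smul_neg, ha.1, neg_zero], by rw [smul_neg, ha.2, neg_zero]⟩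

/-- `t_ν(x,y) = x̄ȳ·ν`. -/
def tnu (N : ℕ) (ν : B) : ZMod N → ZMod N → B :=
  fun x y => ((x.val * y.val : ℤ)) • ν

/-- `ω_ν(x,y,z) = x̄N·ν` if `ȳ + z̄ ≥ N`, `0` otherwise. -/
def wnu (N : ℕ) (ν : B) : ZMod N → ZMod N → ZMod N → B :=
  fun x y z => if N ≤ y.val + z.val then ((x.val * N : ℤ)) • ν else 0

section AbelianCocycles

variable {A B}

def IsCocycle3 (ω : A → A → A → B) : Prop :=
  ∀ x y z w : A, ω y z w - ω (x + y) z w + ω x (y + z) w - ω x y (z + w) + ω x y z = 0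

theorem mem_Zab3_iff (p : P A B) : p ∈ Zab3 A B ↔ IsCocycle3 p.1 ∧
    (∀ x y z : A, p.2 y z - p.2 (x + y) z + p.2 x z + p.1 x y z - p.1 x z y + p.1 z x y = 0) ∧
    (∀ x y z : A, p.2 x y - p.2 x (y + z) + p.2 x z - p.1 x y z + p.1 y x z - p.1 y z x = 0) := by
  simp [Zab3, IsCocycle3, L1, L2, L3, c1, c2, c3, c4, c5, s1, s2, s3, s4, s5, s6, u1, u2, u5, u6,
    funext_iff, and_assoc]

@[simp]
theorem bd_fst (κ : A → A → B) (x y z : A) :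
    (bd A B κ).1 x y z = κ y z - κ (x + y) z + κ x (y + z) - κ x y := rfl

@[simp]
theorem bd_snd (κ : A → A → B) (x y : A) : (bd A B κ).2 x y = κ y x - κ x y := rfl

theorem bd_mem_Zab3 (κ : A → A → B) : bd A B κ ∈ Zab3 A B := by
  refine (mem_Zab3_iff _).2 ⟨fun x y z w => ?_, fun x y z => ?_, fun x y z => ?_⟩
  · simp only [bd_fst, add_assoc]
    abel
  · simp only [bd_fst, bd_snd, add_comm z]
    abel
  · simp only [bd_fst, bd_snd, add_comm y x, add_comm z x]
    abel

theorem IsCocycle3.apply_zero_zero_zero {ω : A → A → A → B} (hω : IsCocycle3 ω) :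
    ω 0 0 0 = 0 := by
  simpa using hω 0 0 0 0

section Cocycle

variable {p : P A B}

theorem snd_zero_zero_of_mem_Zab3 (hp : p ∈ Zab3 A B) : p.2 0 0 = 0 := by
  obtain ⟨hω, hex, -⟩ := (mem_Zab3_iff p).1 hp
  simpa [hω.apply_zero_zero_zero] using hex 0 0 0

theorem snd_add_snd_swap_add_left (hp : p ∈ Zab3 A B) (x y z : A) :
    p.2 (x + y) z + p.2 z (x + y) = (p.2 x z + p.2 z x) + (p.2 y z + p.2 z y) := by
  obtain ⟨-, hex₁, hex₂⟩ := (mem_Zab3_iff p).1 hp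
  linear_combination (norm := abel) -hex₁ x y z - hex₂ z x y

theorem snd_add_self (hp : p ∈ Zab3 A B) (x y : A) :
    p.2 (x + y) (x + y) = p.2 x x + p.2 y y + (p.2 x y + p.2 y x) := by
  obtain ⟨hω, hex₁, hex₂⟩ := (mem_Zab3_iff p).1 hp
  have hω' := hω x y x y
  rw [add_comm y x] at hω'
  linear_combination (norm := abel) -hex₁ x y (x + y) - hex₂ x x y - hex₂ y x y - hω'

theorem snd_nsmul_add_snd_swap (hp : p ∈ Zab3 A B) (x y : A) (n : ℕ) :
    p.2 (n • x) y + p.2 y (n • x) = n • (p.2 x y + p.2 y x) :=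
  map_nsmul (AddMonoidHom.mk' (fun x => p.2 x y + p.2 y x) (snd_add_snd_swap_add_left hp · · y))
    n x

theorem snd_nsmul_self (hp : p ∈ Zab3 A B) (x : A) (n : ℕ) :
    p.2 (n • x) (n • x) = (n * n) • p.2 x x := by
  induction n with
  | zero => simpa using snd_zero_zero_of_mem_Zab3 hp
  | succ n ih =>
    rw [succ_nsmul, snd_add_self hp, ih, snd_nsmul_add_snd_swap hp]
    module

theorem snd_self_mem_nuSub (hp : p ∈ Zab3 A B) {n : ℕ} {x : A} (hx : n • x = 0) :
    p.2 x x ∈ nuSub B n := by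
  have hb := snd_nsmul_add_snd_swap hp x x n
  have hb₀ := snd_nsmul_add_snd_swap hp x x 0
  have hq := snd_nsmul_self hp x n
  rw [zero_smul, zero_smul] at hb₀
  rw [hx, hb₀] at hb
  rw [hx, snd_zero_zero_of_mem_Zab3 hp] at hq
  constructor
  · rw [hq, ← natCast_zsmul, Nat.cast_mul, sq]
  · rw [mul_comm, mul_zsmul, natCast_zsmul, two_zsmul, hb]

theorem snd_add_left_of_fst_eq_zero (hp : p ∈ Zab3 A B) (h0 : p.1 = 0) (x y z : A) :
    p.2 (x + y) z = p.2 x z + p.2 y z := by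
  have hex := ((mem_Zab3_iff p).1 hp).2.1 x y z
  simp only [h0, Pi.zero_apply, add_zero, sub_zero] at hex
  linear_combination (norm := abel) -hex

theorem snd_add_right_of_fst_eq_zero (hp : p ∈ Zab3 A B) (h0 : p.1 = 0) (x y z : A) :
    p.2 x (y + z) = p.2 x y + p.2 x z := by
  have hex := ((mem_Zab3_iff p).1 hp).2.2 x y z
  simp only [h0, Pi.zero_apply, add_zero, sub_zero] at hex
  linear_combination (norm := abel) -hex

end Cocycle

def cyclicPrimitive (ω : A → A → A → B) (g : A) (a : ℕ) (z : A) : B :=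
  ω 0 0 z - ∑ i ∈ Finset.range a, ω g (i • g) z

theorem IsCocycle3.cyclicPrimitive_coboundary {ω : A → A → A → B} (hω : IsCocycle3 ω)
    (g : A) (a b : ℕ) (c : A) :
    cyclicPrimitive ω g b c - cyclicPrimitive ω g (a + b) c + cyclicPrimitive ω g a (b • g + c)
      - cyclicPrimitive ω g a (b • g) = ω (a • g) (b • g) c := by
  induction a with
  | zero =>
    simp only [cyclicPrimitive, zero_add, Finset.range_zero, Finset.sum_empty, zero_smul, sub_zero]
    linear_combination (norm := abel_nf) -hω 0 0 (b • g) c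
  | succ a ih =>
    simp only [cyclicPrimitive, Finset.sum_range_succ] at ih ⊢
    have h := hω g (a • g) (b • g) c
    rw [← add_nsmul] at h
    rw [add_right_comm a 1 b, Finset.sum_range_succ, succ_nsmul, add_comm (a • g) g]
    linear_combination (norm := abel) ih + h

end AbelianCocycles

section CyclicGroups

variable {B} {N : ℕ} [NeZero N]

theorem sum_range_natCast_zmod (f : ZMod N → B) :
    ∑ i ∈ Finset.range N, f i = ∑ x, f x :=
  Finset.sum_nbij' (fun i => (i : ZMod N)) ZMod.val (fun _ _ => Finset.mem_univ _)
    (fun x _ => Finset.mem_range.2 x.val_lt)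
    (fun _ hi => ZMod.val_cast_of_lt (Finset.mem_range.1 hi))
    (fun x _ => ZMod.natCast_zmod_val x) (fun _ _ => rfl)

theorem eq_val_nsmul_of_map_add {f : ZMod N → B} (hf : ∀ a b, f (a + b) = f a + f b)
    (x : ZMod N) : f x = x.val • f 1 := by
  conv_lhs => rw [← ZMod.natCast_zmod_val x, ← Nat.smul_one_eq_cast]
  exact map_nsmul (AddMonoidHom.mk' f hf) _ _

theorem IsCocycle3.sum_one_add {ω : ZMod N → ZMod N → ZMod N → B} (hω : IsCocycle3 ω)
    (z w : ZMod N) : ∑ x, ω 1 x (z + w) = ∑ x, ω 1 x z + ∑ x, ω 1 x w := by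
  have h : ∑ x, (ω x z w - ω (1 + x) z w + ω 1 (x + z) w - ω 1 x (z + w) + ω 1 x z) = 0 :=
    Finset.sum_eq_zero fun x _ => hω 1 x z w
  simp only [Finset.sum_add_distrib, Finset.sum_sub_distrib,
    Fintype.sum_equiv (Equiv.addLeft 1) (fun x => ω (1 + x) z w) (fun x => ω x z w)
      (fun _ => rfl),
    Fintype.sum_equiv (Equiv.addRight z) (fun x => ω 1 (x + z) w) (fun x => ω 1 x w)
      (fun _ => rfl)] at h
  linear_combination (norm := abel) -h

variable {p : P (ZMod N) B}

theorem sum_fst_one_one_of_mem_Zab3 (hp : p ∈ Zab3 (ZMod N) B) :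
    ∑ x, p.1 1 x 1 = N • p.2 1 1 := by
  have hex := ((mem_Zab3_iff p).1 hp).2.2
  have h : ∀ x, p.1 1 x 1 = p.2 1 x - p.2 1 (x + 1) + p.2 1 1 := fun x => by
    linear_combination (norm := abel) -hex 1 x 1
  simp only [h, Finset.sum_add_distrib, Finset.sum_sub_distrib, Finset.sum_const,
    Finset.card_univ, ZMod.card,
    Fintype.sum_equiv (Equiv.addRight 1) (fun x => p.2 1 (x + 1)) (fun x => p.2 1 x)
      (fun _ => rfl), sub_self, zero_add]

theorem sum_fst_one_eq_zero_of_snd_one_one (hp : p ∈ Zab3 (ZMod N) B) (h11 : p.2 1 1 = 0)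
    (z : ZMod N) : ∑ x, p.1 1 x z = 0 := by
  rw [eq_val_nsmul_of_map_add (f := fun z => ∑ x, p.1 1 x z)
    ((mem_Zab3_iff p).1 hp).1.sum_one_add z, sum_fst_one_one_of_mem_Zab3 hp, h11, smul_zero,
    smul_zero]

theorem cyclicPrimitive_one_periodic {ω : ZMod N → ZMod N → ZMod N → B}
    (hω : ∀ z, ∑ x, ω 1 x z = 0) (z : ZMod N) :
    Function.Periodic (fun a => cyclicPrimitive ω 1 a z) N := by
  intro a
  simp only [cyclicPrimitive, Finset.sum_range_add, Nat.smul_one_eq_cast, Nat.cast_add]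
  rw [sum_range_natCast_zmod (fun x => ω 1 ((a : ZMod N) + x) z),
    Fintype.sum_equiv (Equiv.addLeft (a : ZMod N)) (fun x => ω 1 (a + x) z) (fun x => ω 1 x z)
      (fun _ => rfl), hω, add_zero]

theorem exists_bd_fst_eq (hp : p ∈ Zab3 (ZMod N) B) (h11 : p.2 1 1 = 0) :
    ∃ κ : ZMod N → ZMod N → B, (bd (ZMod N) B κ).1 = p.1 := by
  have hper := cyclicPrimitive_one_periodic (sum_fst_one_eq_zero_of_snd_one_one hp h11)
  refine ⟨fun x z => cyclicPrimitive p.1 1 x.val z, ?_⟩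
  funext x y z
  have h := ((mem_Zab3_iff p).1 hp).1.cyclicPrimitive_coboundary 1 x.val y.val z
  simp only [Nat.smul_one_eq_cast, ZMod.natCast_zmod_val] at h
  rw [bd_fst, ZMod.val_add, (hper z).map_mod_nat]
  exact h

theorem mem_range_bd_iff (hp : p ∈ Zab3 (ZMod N) B) :
    p ∈ (bd (ZMod N) B).range ↔ p.2 1 1 = 0 := by
  constructor
  · rintro ⟨κ, rfl⟩
    simp
  · intro h11
    obtain ⟨κ, hκ⟩ := exists_bd_fst_eq hp h11
    set q := p - bd (ZMod N) B κ
    have hq : q ∈ Zab3 (ZMod N) B := sub_mem hp (bd_mem_Zab3 κ)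
    have hq₁ : q.1 = 0 := by simp [q, hκ]
    have hq₂ : q.2 = 0 := by
      funext x y
      rw [eq_val_nsmul_of_map_add (f := (q.2 · y)) (snd_add_left_of_fst_eq_zero hq hq₁ · · y),
        eq_val_nsmul_of_map_add (f := q.2 1) (snd_add_right_of_fst_eq_zero hq hq₁ 1) y]
      simp [q, h11]
    exact ⟨κ, (sub_eq_zero.1 (Prod.ext hq₁ hq₂)).symm⟩

end CyclicGroups

section ExplicitCocycles

variable {B} {N : ℕ}

def carry (x y : ZMod N) : ℤ := if N ≤ x.val + y.val then 1 else 0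

theorem carry_comm (x y : ZMod N) : carry x y = carry y x := by
  simp only [carry, Nat.add_comm]

variable [NeZero N]

theorem natCast_mul_carry (x y : ZMod N) :
    (N : ℤ) * carry x y = x.val + y.val - (x + y).val := by
  unfold carry
  split_ifs with h
  · have := ZMod.val_add_val_of_le h
    omega
  · have := ZMod.val_add_of_lt (not_le.1 h)
    omega

theorem carry_cocycle (x y z : ZMod N) :
    carry y z - carry (x + y) z + carry x (y + z) - carry x y = 0 := by
  refine (mul_eq_zero.1 ?_).resolve_left (Nat.cast_ne_zero.2 (NeZero.ne N))
  linear_combination natCast_mul_carry y z - natCast_mul_carry (x + y) z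
    + natCast_mul_carry x (y + z) - natCast_mul_carry x y
    + congrArg (fun a : ZMod N => (a.val : ℤ)) (add_assoc x y z)

theorem wnu_eq (ν : B) (x y z : ZMod N) :
    wnu B N ν x y z = ((x.val : ℤ) * N * carry y z) • ν := by
  unfold wnu carry
  split_ifs <;> simp

theorem wnu_tnu_mem_Zab3 {ν : B} (hν : ν ∈ nuSub B N) :
    (wnu B N ν, tnu B N ν) ∈ Zab3 (ZMod N) B := by
  have hdvd : ∀ {k m : ℤ}, k • ν = 0 → k ∣ m → m • ν = 0 := fun hk h =>
    addOrderOf_dvd_iff_zsmul_eq_zero.1 ((addOrderOf_dvd_iff_zsmul_eq_zero.2 hk).trans h)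
  -- The three conditions read `m • ν = 0` with `m` a multiple of `N²`, of `2N`, and `m = 0`.
  refine (mem_Zab3_iff _).2 ⟨fun x y z w => ?_, fun x y z => ?_, fun x y z => ?_⟩ <;>
    simp only [wnu_eq, tnu, ← sub_smul, ← add_smul]
  · refine hdvd hν.1 ⟨carry x y * carry z w, ?_⟩
    linear_combination -(N : ℤ) * carry z w * natCast_mul_carry x y
      - (N : ℤ) * x.val * carry_cocycle y z w
  · refine hdvd hν.2 ⟨z.val * carry x y, ?_⟩
    linear_combination -(z.val : ℤ) * natCast_mul_carry x y + (x.val * N : ℤ) * carry_comm y z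
  · rw [← zero_smul ℤ ν]
    congr 1
    linear_combination -(x.val : ℤ) * natCast_mul_carry y z + (y.val * N : ℤ) * carry_comm x z

theorem tnu_one_one_of_mem {ν : B} (hν : ν ∈ nuSub B N) : tnu B N ν 1 1 = ν := by
  rcases (NeZero.one_le : 1 ≤ N).eq_or_lt with rfl | hN
  · obtain rfl : ν = 0 := by simpa using hν.1
    simp [tnu]
  · have : Fact (1 < N) := ⟨hN⟩
    simp [tnu, ZMod.val_one]

variable (B N)

def nuCocycle : nuSub B N →+ Zab3 (ZMod N) B where
  toFun ν := ⟨(wnu B N ν, tnu B N ν), wnu_tnu_mem_Zab3 ν.2⟩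
  map_zero' := by
    ext <;> simp [wnu_eq, tnu]
  map_add' _ _ := by
    ext <;> simp [wnu_eq, tnu, smul_add]

def nuClass : nuSub B N →+ Hab3 (ZMod N) B :=
  (QuotientAddGroup.mk' _).comp (nuCocycle B N)

variable {B N}

theorem nuClass_injective : Function.Injective (nuClass B N) := by
  refine (injective_iff_map_eq_zero _).2 fun ν hν => Subtype.ext ?_
  rw [nuClass, AddMonoidHom.comp_apply, QuotientAddGroup.mk'_apply,
    QuotientAddGroup.eq_zero_iff, AddSubgroup.mem_addSubgroupOf,
    mem_range_bd_iff (nuCocycle B N ν).2] at hν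
  exact (tnu_one_one_of_mem ν.2).symm.trans hν

theorem nuClass_surjective : Function.Surjective (nuClass B N) := by
  refine fun c => QuotientAddGroup.induction_on c fun ⟨p, hp⟩ => ?_
  have hν : p.2 1 1 ∈ nuSub B N := snd_self_mem_nuSub hp (by simp)
  refine ⟨⟨p.2 1 1, hν⟩, ?_⟩
  rw [nuClass, AddMonoidHom.comp_apply, QuotientAddGroup.mk'_apply, QuotientAddGroup.eq,
    AddSubgroup.mem_addSubgroupOf, AddSubgroup.coe_add, AddSubgroup.coe_neg,
    mem_range_bd_iff (add_mem (neg_mem (nuCocycle B N _).2) hp)]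
  simp [nuCocycle, tnu_one_one_of_mem hν]

end ExplicitCocycles

/-- The map `ν ↦ [(ω_ν, t_ν)]` is a group isomorphism
`{ν ∈ B : N²ν = 2Nν = 0} ≅ H³_ab(ℤ/N, B)`; in particular each `(ω_ν, t_ν)`
lies in `Z³_ab(ℤ/N,B)` and its associated quadratic form is `x ↦ x̄²·ν`. -/
theorem statement2 (N : ℕ) (hN : 1 ≤ N) :
    ∃ (hmem : ∀ ν : B, ν ∈ nuSub B N → (wnu B N ν, tnu B N ν) ∈ Zab3 (ZMod N) B)
      (e : nuSub B N ≃+ Hab3 (ZMod N) B),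
      (∀ ν : nuSub B N,
          e ν = QuotientAddGroup.mk ⟨(wnu B N (ν : B), tnu B N (ν : B)), hmem ν ν.2⟩) ∧
      (∀ (ν : B) (x : ZMod N), tnu B N ν x x = ((x.val ^ 2 : ℤ)) • ν) := by
  have : NeZero N := NeZero.of_pos hN
  exact ⟨fun _ hν => wnu_tnu_mem_Zab3 hν,
    AddEquiv.ofBijective (nuClass B N) ⟨nuClass_injective, nuClass_surjective⟩,
    fun _ => rfl, fun ν x => by rw [tnu, sq]⟩

end Stmt2
end

section
/- Let (A,q) be a pre-metric group, let (λ,ω) be an associative zesting datum of (A,q), and let ψ ∈ C¹(Â, A₀) be any function with λ' := λ · d¹(ψ). Then λ' ∧_c λ' = (λ ∧_c λ) · d³( (λ ∧_c ψ)·(ψ ∧_c λ') ), and consequently the pair (λ', ω · (λ ∧_c ψ)·(ψ ∧_c λ')) is again an associative zesting datum of (A,q). -/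
/-!
Statement 4: modifying an associative zesting datum `(λ, ω)` of a pre-metric
group `(A,q)` by a 1-cochain `ψ ∈ C¹(Â, A₀)` again gives an associative
zesting datum `(λ·d¹ψ, ω·(λ ∧_c ψ)·(ψ ∧_c λ'))`.
-/

namespace Zesting

variable {A : Type*} [CommGroup A]

/-- The bicharacter `b(x,y) = q(x)q(y)/q(xy)` associated with `q`. -/
def bchar (q : A → ℂˣ) (x y : A) : ℂˣ := q x * q y * (q (x * y))⁻¹

/-- `(A, q)` is a pre-metric group: `b` is a bicharacter and `q(x) = q(x⁻¹)`. -/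
def IsPreMetric (q : A → ℂˣ) : Prop :=
  (∀ x y z, bchar q (x * y) z = bchar q x z * bchar q y z) ∧
  (∀ x y z, bchar q x (y * z) = bchar q x y * bchar q x z) ∧
  (∀ x, q x = q x⁻¹)

/-- `A₀`, the kernel of the associated bicharacter. -/
def A0 (q : A → ℂˣ) : Set A := {x | ∀ y, q (x * y) = q x * q y}

/-- The symmetric bicharacter `c(x,y) = (−1)^{q̂(x)q̂(y)}` on `A₀`. -/
noncomputable def cc (q : A → ℂˣ) (x y : A) : ℂˣ := if q x = -1 ∧ q y = -1 then -1 else 1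

/-- Inhomogeneous differential on 1-cochains (trivial action). -/
def d1 {X M : Type*} [Monoid X] [CommGroup M] (ψ : X → M) : X → X → M :=
  fun a b => ψ b * (ψ (a * b))⁻¹ * ψ a

/-- Inhomogeneous differential on 2-cochains (trivial action). -/
def d2 {X M : Type*} [Monoid X] [CommGroup M] (l : X → X → M) : X → X → X → M :=
  fun a b c => l b c * (l (a * b) c)⁻¹ * l a (b * c) * (l a b)⁻¹

/-- Inhomogeneous differential on 3-cochains (trivial action). -/
def d3 {X M : Type*} [Monoid X] [CommGroup M] (w : X → X → X → M) : X → X → X → X → M :=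
  fun a b c d => w b c d * (w (a * b) c d)⁻¹ * w a (b * c) d * (w a b (c * d))⁻¹ * w a b c

/-- An associative zesting datum of `(A,q)`: `λ ∈ Z²(Â, A₀)` and
`ω ∈ C³(Â, ℂˣ)` with `d³(ω) = λ ∧_c λ`. -/
def IsAssocZesting (q : A → ℂˣ) (l : (A →* ℂˣ) → (A →* ℂˣ) → A)
    (w : (A →* ℂˣ) → (A →* ℂˣ) → (A →* ℂˣ) → ℂˣ) : Prop :=
  (∀ χ₁ χ₂, l χ₁ χ₂ ∈ A0 q) ∧
  (∀ χ₁ χ₂ χ₃, d2 l χ₁ χ₂ χ₃ = 1) ∧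
  (∀ χ₁ χ₂ χ₃ χ₄, d3 w χ₁ χ₂ χ₃ χ₄ = cc q (l χ₁ χ₂) (l χ₃ χ₄))

/-! ### Auxiliary lemmas -/

lemma zx_one_ne_neg_one : (1 : ℂˣ) ≠ -1 := by
  intro h
  have := congrArg Units.val h
  simp at this
  norm_num at this

lemma zx_neg_one_mul : (-1 : ℂˣ) * -1 = 1 := by ext; simp

/-- `q̂` as a `ZMod 2`-valued function. -/
noncomputable def E (q : A → ℂˣ) (x : A) : ZMod 2 := if q x = -1 then 1 else 0

/-- The character `ZMod 2 → ℂˣ`, `0 ↦ 1`, `1 ↦ -1`. -/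
noncomputable def chi (n : ZMod 2) : ℂˣ := if n = 1 then -1 else 1

lemma zmod2_cases (a : ZMod 2) : a = 0 ∨ a = 1 := by revert a; decide

lemma chi_add (a b : ZMod 2) : chi (a + b) = chi a * chi b := by
  rcases zmod2_cases a with ha | ha <;> rcases zmod2_cases b with hb | hb <;>
    subst ha <;> subst hb <;> simp [chi, zx_neg_one_mul]

lemma chi_inv (a : ZMod 2) : (chi a)⁻¹ = chi a := by
  rcases zmod2_cases a with ha | ha <;> subst ha <;> simp [chi]

omit [CommGroup A] in
lemma cc_eq_chi (q : A → ℂˣ) (x y : A) : cc q x y = chi (E q x * E q y) := by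
  by_cases hx : q x = -1 <;> by_cases hy : q y = -1 <;>
    simp [cc, E, chi, hx, hy]

section q

variable {q : A → ℂˣ} (hq : IsPreMetric q)

lemma q_one {x : A} (hx : x ∈ A0 q) : q 1 = 1 := by
  have h := hx 1
  rw [mul_one] at h
  exact mul_left_cancel (h.symm.trans (mul_one _).symm)

include hq in
lemma q_sq {x : A} (hx : x ∈ A0 q) : q x * q x = 1 := by
  have h := hx x⁻¹
  rw [mul_inv_cancel, q_one hx] at h
  rw [← hq.2.2 x] at h
  exact h.symm

include hq in
lemma q_pm {x : A} (hx : x ∈ A0 q) : q x = 1 ∨ q x = -1 := by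
  have h := congrArg Units.val (q_sq hq hx)
  rw [Units.val_mul, Units.val_one] at h
  rcases mul_self_eq_one_iff.mp h with h3 | h3
  · left; ext; simpa using h3
  · right; ext; simpa using h3

include hq in
lemma q_inv (x : A) : q x⁻¹ = q x := (hq.2.2 x).symm

lemma A0_mul {x y : A} (hx : x ∈ A0 q) (hy : y ∈ A0 q) : x * y ∈ A0 q := by
  intro z
  rw [mul_assoc, hx (y * z), hy z, hx y, mul_assoc]

include hq in
lemma A0_inv {x : A} (hx : x ∈ A0 q) : x⁻¹ ∈ A0 q := by
  intro z
  have h1 : q (x * (x⁻¹ * z)) = q x * q (x⁻¹ * z) := hx _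
  rw [mul_inv_cancel_left] at h1
  have hqi : q x⁻¹ = (q x)⁻¹ := by
    rw [q_inv hq]
    exact eq_inv_of_mul_eq_one_left (q_sq hq hx)
  rw [hqi, h1, inv_mul_cancel_left]

include hq in
lemma E_mul {x y : A} (hx : x ∈ A0 q) (hy : y ∈ A0 q) :
    E q (x * y) = E q x + E q y := by
  have hxy := hx y
  unfold E
  rcases q_pm hq hx with h1 | h1 <;> rcases q_pm hq hy with h2 | h2 <;>
    rw [h1, h2] at hxy
  · rw [one_mul] at hxy
    simp [hxy, h1, h2, zx_one_ne_neg_one]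
  · rw [one_mul] at hxy
    simp [hxy, h1, h2, zx_one_ne_neg_one]
  · rw [mul_one] at hxy
    simp [hxy, h1, h2, zx_one_ne_neg_one]
  · rw [zx_neg_one_mul] at hxy
    simp [hxy, h1, h2, zx_one_ne_neg_one]
    decide

include hq in
lemma E_inv (x : A) : E q x⁻¹ = E q x := by
  unfold E; rw [q_inv hq]

lemma E_one {x : A} (hx : x ∈ A0 q) : E q 1 = 0 := by
  simp [E, q_one hx, zx_one_ne_neg_one]

include hq in
lemma E_quad {x1 x2 x3 x4 : A} (h1 : x1 ∈ A0 q) (h2 : x2 ∈ A0 q)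
    (h3 : x3 ∈ A0 q) (h4 : x4 ∈ A0 q) :
    E q (x1 * x2⁻¹ * x3 * x4⁻¹) = E q x1 + E q x2 + E q x3 + E q x4 := by
  rw [E_mul hq (A0_mul (A0_mul h1 (A0_inv hq h2)) h3) (A0_inv hq h4),
    E_mul hq (A0_mul h1 (A0_inv hq h2)) h3,
    E_mul hq h1 (A0_inv hq h2), E_inv hq, E_inv hq]

end q

/-! ### Cochain calculus -/

lemma d2_mul {X M : Type*} [Monoid X] [CommGroup M] (l m : X → X → M) (a b c : X) :
    d2 (fun a b => l a b * m a b) a b c = d2 l a b c * d2 m a b c := by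
  simp only [d2]
  rw [← Additive.ofMul.apply_eq_iff_eq]
  simp only [ofMul_mul, ofMul_inv]
  abel

lemma d2_d1 {X M : Type*} [CommMonoid X] [CommGroup M] (ψ : X → M) (a b c : X) :
    d2 (d1 ψ) a b c = 1 := by
  simp only [d2, d1, mul_assoc]
  rw [← Additive.ofMul.apply_eq_iff_eq]
  simp only [ofMul_mul, ofMul_inv, ofMul_one]
  abel

lemma d3_mul {X M : Type*} [Monoid X] [CommGroup M] (w m : X → X → X → M) (a b c d : X) :
    d3 (fun a b c => w a b c * m a b c) a b c d = d3 w a b c d * d3 m a b c d := by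
  simp only [d3]
  rw [← Additive.ofMul.apply_eq_iff_eq]
  simp only [ofMul_mul, ofMul_inv]
  abel

lemma d3_chi {X : Type*} [Monoid X] (f : X → X → X → ZMod 2) (a b c d : X) :
    d3 (fun x y z => chi (f x y z)) a b c d
      = chi (f b c d + f (a * b) c d + f a (b * c) d + f a b (c * d) + f a b c) := by
  simp [d3, chi_add, chi_inv, mul_assoc]

section main

variable {q : A → ℂˣ} (hq : IsPreMetric q)
  (l : (A →* ℂˣ) → (A →* ℂˣ) → A) (ψ : (A →* ℂˣ) → A)
  (hl : ∀ χ₁ χ₂, l χ₁ χ₂ ∈ A0 q) (hψ : ∀ χ, ψ χ ∈ A0 q)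
  (hcoc : ∀ χ₁ χ₂ χ₃, d2 l χ₁ χ₂ χ₃ = 1)

include hq hψ in
lemma d1_mem : ∀ a b, d1 ψ a b ∈ A0 q := fun a b =>
  A0_mul (A0_mul (hψ b) (A0_inv hq (hψ (a * b)))) (hψ a)

include hq hψ in
lemma E_d1 (a b : A →* ℂˣ) :
    E q (d1 ψ a b) = E q (ψ a) + E q (ψ b) + E q (ψ (a * b)) := by
  simp only [d1]
  rw [E_mul hq (A0_mul (hψ b) (A0_inv hq (hψ (a * b)))) (hψ a),
    E_mul hq (hψ b) (A0_inv hq (hψ (a * b))), E_inv hq]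
  ring

include hq hl hψ in
lemma E_l' (a b : A →* ℂˣ) :
    E q (l a b * d1 ψ a b)
      = E q (l a b) + (E q (ψ a) + E q (ψ b) + E q (ψ (a * b))) := by
  rw [E_mul hq (hl a b) (d1_mem hq ψ hψ a b), E_d1 hq ψ hψ]

include hq hl hcoc in
lemma E_coc (a b c : A →* ℂˣ) :
    E q (l b c) + E q (l (a * b) c) + E q (l a (b * c)) + E q (l a b) = 0 := by
  have h := congrArg (E q) (hcoc a b c)
  simp only [d2] at h
  rw [E_quad hq (hl b c) (hl (a * b) c) (hl a (b * c)) (hl a b),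
    E_one (hl a b)] at h
  exact h

include hq hl hψ hcoc in
lemma key (χ₁ χ₂ χ₃ χ₄ : A →* ℂˣ) :
    cc q (l χ₁ χ₂ * d1 ψ χ₁ χ₂) (l χ₃ χ₄ * d1 ψ χ₃ χ₄)
      = cc q (l χ₁ χ₂) (l χ₃ χ₄) *
          d3 (fun a b c => cc q (l a b) (ψ c) * cc q (ψ a) (l b c * d1 ψ b c))
            χ₁ χ₂ χ₃ χ₄ := by
  have hκ : (fun a b c => cc q (l a b) (ψ c) * cc q (ψ a) (l b c * d1 ψ b c))
      = (fun a b c : A →* ℂˣ =>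
          chi (E q (l a b) * E q (ψ c) + E q (ψ a) * E q (l b c * d1 ψ b c))) := by
    funext a b c
    rw [cc_eq_chi, cc_eq_chi, chi_add]
  rw [hκ, d3_chi, cc_eq_chi, cc_eq_chi, ← chi_add]
  refine congrArg chi ?_
  simp only [E_l' hq l ψ hl hψ]
  simp only [← mul_assoc]
  have h123 := E_coc hq l hl hcoc χ₁ χ₂ χ₃
  have h234 := E_coc hq l hl hcoc χ₂ χ₃ χ₄
  have hchar : (2 : ZMod 2) = 0 := rfl
  linear_combination E q (ψ χ₄) * h123 + E q (ψ χ₁) * h234 -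
    (E q (ψ χ₁) * E q (ψ χ₂) + E q (ψ χ₁) * E q (l χ₂ χ₃) +
      E q (ψ χ₁) * E q (l (χ₂ * χ₃) χ₄) + E q (ψ χ₁) * E q (ψ (χ₂ * χ₃)) +
      E q (ψ χ₁) * E q (ψ (χ₂ * χ₃ * χ₄)) + E q (ψ χ₁) * E q (l χ₂ (χ₃ * χ₄)) +
      E q (ψ χ₄) * E q (l χ₂ χ₃) + E q (ψ χ₄) * E q (l (χ₁ * χ₂) χ₃) +
      E q (ψ χ₄) * E q (l χ₁ (χ₂ * χ₃))) * hchar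

end main

/-- If `(λ,ω)` is an associative zesting datum of the
pre-metric group `(A,q)` and `ψ ∈ C¹(Â, A₀)`, `λ' := λ·d¹(ψ)`, then
`λ' ∧_c λ' = (λ ∧_c λ)·d³((λ ∧_c ψ)·(ψ ∧_c λ'))`, and
`(λ', ω·(λ ∧_c ψ)·(ψ ∧_c λ'))` is again an associative zesting datum. -/
theorem statement4 [Finite A] (q : A → ℂˣ) (hq : IsPreMetric q)
    (l : (A →* ℂˣ) → (A →* ℂˣ) → A)
    (w : (A →* ℂˣ) → (A →* ℂˣ) → (A →* ℂˣ) → ℂˣ)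
    (hz : IsAssocZesting q l w)
    (ψ : (A →* ℂˣ) → A) (hψ : ∀ χ, ψ χ ∈ A0 q) :
    (∀ χ₁ χ₂ χ₃ χ₄,
      cc q (l χ₁ χ₂ * d1 ψ χ₁ χ₂) (l χ₃ χ₄ * d1 ψ χ₃ χ₄)
        = cc q (l χ₁ χ₂) (l χ₃ χ₄) *
            d3 (fun a b c => cc q (l a b) (ψ c) * cc q (ψ a) (l b c * d1 ψ b c))
              χ₁ χ₂ χ₃ χ₄) ∧
    IsAssocZesting q (fun a b => l a b * d1 ψ a b)
      (fun a b c => w a b c * cc q (l a b) (ψ c) * cc q (ψ a) (l b c * d1 ψ b c)) := by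
  obtain ⟨hl, hcoc, hw⟩ := hz
  refine ⟨key hq l ψ hl hψ hcoc, ?_, ?_, ?_⟩
  · exact fun a b => A0_mul (hl a b) (d1_mem hq ψ hψ a b)
  · intro a b c
    rw [d2_mul l (d1 ψ) a b c, hcoc a b c, one_mul, d2_d1]
  · intro χ₁ χ₂ χ₃ χ₄
    have hfun : (fun a b c =>
          w a b c * cc q (l a b) (ψ c) * cc q (ψ a) (l b c * d1 ψ b c))
        = (fun a b c =>
          w a b c * (cc q (l a b) (ψ c) * cc q (ψ a) (l b c * d1 ψ b c))) := by
      funext a b c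
      rw [mul_assoc]
    rw [hfun,
      d3_mul w (fun a b c => cc q (l a b) (ψ c) * cc q (ψ a) (l b c * d1 ψ b c)),
      hw, ← key hq l ψ hl hψ hcoc]

end Zesting
end

section
/- Let (A,q) be a pre-metric group and (λ,ω) an associative zesting datum of (A,q). There exists a 2-cochain t ∈ C²(Â, ℂˣ) satisfying ω(χ₁,χ₂,χ₃)ω(χ₂,χ₃,χ₁)/ω(χ₂,χ₁,χ₃) = t(χ₁,χ₂)t(χ₁,χ₃)/t(χ₁,χ₂χ₃) for all χ₁,χ₂,χ₃ ∈ Â if and only if ∏_{σ ∈ S₃} ω(χ_{σ(1)}, χ_{σ(2)}, χ_{σ(3)})^{sgn(σ)} = 1 for all χ₁,χ₂,χ₃ ∈ Â. -/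
/-!
Write `F_χ(ψ,φ) = ω(χ,ψ,φ) ω(ψ,φ,χ) / ω(ψ,χ,φ)`. The alternating product over `S₃` is
`F_χ₁(χ₂,χ₃) / F_χ₁(χ₃,χ₂)`, so it is trivial exactly when every `F_χ` is symmetric; since
coboundaries on an abelian group are symmetric, this is necessary. Conversely, `d²F_χ` is a ratio
of four values of `d³ω = λ ∧_c λ`. Symmetry of the `F_χ` forces `c(λ(χ,ψ), ·) = c(λ(ψ,χ), ·)`
(compare `d²F_ψ(χ,χ,ψ)` with `d²F_ψ(ψ,χ,χ)`), and then these four values cancel, so each `F_χ` is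
a symmetric 2-cocycle. Such a cocycle defines an abelian extension of `Â` by `ℂˣ`, which splits
because `ℂˣ` is divisible, hence injective; the splitting exhibits `F_χ` as a coboundary `d¹t(χ,·)`.
-/

namespace Zesting

variable {A : Type*} [CommGroup A]

noncomputable instance {K : Type*} [Field K] [IsAlgClosed K] : RootableBy Kˣ ℕ :=
  rootableByOfPowLeftSurj _ _ fun {n} hn y => by
    obtain ⟨z, hz⟩ := IsAlgClosed.exists_pow_nat_eq (y : K) (Nat.pos_of_ne_zero hn)
    have hz0 : z ≠ 0 := by
      rintro rfl
      exact y.ne_zero (by simp [← hz, hn])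
    exact ⟨Units.mk0 z hz0, Units.ext (by rw [Units.val_pow_eq_pow_val, Units.val_mk0, hz])⟩

noncomputable instance {K : Type*} [Field K] [IsAlgClosed K] : RootableBy Kˣ ℤ :=
  Group.rootableByIntOfRootableByNat _

instance {M : Type*} [CommGroup M] [RootableBy M ℤ] : DivisibleBy (Additive M) ℤ where
  div a n := .ofMul (RootableBy.root a.toMul n)
  div_zero a := congrArg Additive.ofMul (RootableBy.root_zero a.toMul)
  div_cancel a hn := congrArg Additive.ofMul (RootableBy.root_cancel a.toMul hn)

section SymmetricCocycle

variable {G M : Type*} [CommGroup G] [CommGroup M] {g : G → G → M}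

theorem d2_eq_one_iff {a b c : G} :
    d2 g a b c = 1 ↔ g b c * g a (b * c) = g (a * b) c * g a b := by
  rw [d2, mul_inv_eq_one, mul_right_comm, mul_inv_eq_iff_eq_mul, mul_comm (g a b)]

theorem apply_one_left_of_d2_eq_one (hg : ∀ a b c, d2 g a b c = 1) (y : G) : g 1 y = g 1 1 := by
  simpa using d2_eq_one_iff.mp (hg 1 1 y)

@[ext] structure CocycleExt (g : G → G → M) where
  val : M
  proj : G

-- `g` need not be normalized: the identity is `((g 1 1)⁻¹, 1)`.
abbrev CocycleExt.commGroup (hsymm : ∀ x y, g x y = g y x) (hg : ∀ a b c, d2 g a b c = 1) :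
    CommGroup (CocycleExt g) where
  mul p r := ⟨p.val * r.val * g p.proj r.proj, p.proj * r.proj⟩
  one := ⟨(g 1 1)⁻¹, 1⟩
  inv p := ⟨(p.val * g p.proj p.proj⁻¹ * g 1 1)⁻¹, p.proj⁻¹⟩
  mul_assoc p r s := CocycleExt.ext (by
    show p.val * r.val * g p.proj r.proj * s.val * g (p.proj * r.proj) s.proj =
      p.val * (r.val * s.val * g r.proj s.proj) * g p.proj (r.proj * s.proj)
    have := d2_eq_one_iff.mp (hg p.proj r.proj s.proj)
    grind) (mul_assoc _ _ _)
  one_mul p := CocycleExt.ext (by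
    show (g 1 1)⁻¹ * p.val * g 1 p.proj = p.val
    rw [apply_one_left_of_d2_eq_one hg p.proj, mul_right_comm, inv_mul_cancel, one_mul]) (one_mul _)
  mul_one p := CocycleExt.ext (by
    show p.val * (g 1 1)⁻¹ * g p.proj 1 = p.val
    rw [hsymm p.proj 1, apply_one_left_of_d2_eq_one hg p.proj, inv_mul_cancel_right]) (mul_one _)
  inv_mul_cancel p := CocycleExt.ext (by
    show (p.val * g p.proj p.proj⁻¹ * g 1 1)⁻¹ * p.val * g p.proj⁻¹ p.proj = (g 1 1)⁻¹
    rw [hsymm p.proj⁻¹]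
    apply Additive.ofMul.injective
    simp only [ofMul_mul, ofMul_inv]
    abel) (inv_mul_cancel _)
  mul_comm p r := CocycleExt.ext (by
    show p.val * r.val * g p.proj r.proj = r.val * p.val * g r.proj p.proj
    rw [hsymm, mul_comm p.val]) (mul_comm _ _)

theorem exists_coboundary_eq_of_symm [RootableBy M ℤ] (hsymm : ∀ x y, g x y = g y x)
    (hg : ∀ a b c, d2 g a b c = 1) : ∃ f : G → M, ∀ x y, g x y = f x * f y / f (x * y) := by
  let _ := CocycleExt.commGroup hsymm hg
  let ι : M →* CocycleExt g :=
    { toFun m := ⟨m * (g 1 1)⁻¹, 1⟩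
      map_one' := CocycleExt.ext (one_mul _) rfl
      map_mul' m n := CocycleExt.ext (by
        show m * n * (g 1 1)⁻¹ = m * (g 1 1)⁻¹ * (n * (g 1 1)⁻¹) * g 1 1
        apply Additive.ofMul.injective
        simp only [ofMul_mul, ofMul_inv]
        abel) (mul_one 1).symm }
  have hι : Function.Injective ι := fun m n h => mul_right_cancel (congrArg CocycleExt.val h)
  obtain ⟨r, hr⟩ := (Module.Baer.of_divisible (Additive M)).extension_property_addMonoidHom
    (MonoidHom.toAdditive ι) hι (AddMonoidHom.id _)
  set ρ : CocycleExt g →* M := MonoidHom.toAdditive.symm r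
  have hρ (m : M) : ρ (ι m) = m := DFunLike.congr_fun hr (Additive.ofMul m)
  refine ⟨fun x => ρ ⟨1, x⟩, fun x y => ?_⟩
  have hsplit : (⟨1, x⟩ * ⟨1, y⟩ : CocycleExt g) = ι (g x y) * ⟨1, x * y⟩ :=
    CocycleExt.ext (by
      show 1 * 1 * g x y = g x y * (g 1 1)⁻¹ * 1 * g 1 (x * y)
      simp only [apply_one_left_of_d2_eq_one hg (x * y), mul_one, one_mul, inv_mul_cancel_right])
      (one_mul _).symm
  rw [eq_div_iff_mul_eq', ← map_mul, hsplit, map_mul, hρ]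

end SymmetricCocycle

section Hexagon

variable {X M : Type*} [CommGroup M]

def hexagonCochain (w : X → X → X → M) (a : X) : X → X → M :=
  fun b c => w a b c * w b c a / w b a c

open Equiv in
theorem prod_perm_fin_three_zpow_sign (w : X → X → X → M) (a b c : X) :
    ∏ σ : Perm (Fin 3), w (![a, b, c] (σ 0)) (![a, b, c] (σ 1)) (![a, b, c] (σ 2)) ^
        ((Perm.sign σ : ℤˣ) : ℤ) = hexagonCochain w a b c / hexagonCochain w a c b := by
  rw [show (Finset.univ : Finset (Perm (Fin 3))) =
      {1, swap 0 1, swap 0 2, swap 1 2, swap 0 1 * swap 0 2, swap 0 1 * swap 1 2} by decide]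
  simp +decide [Finset.prod_insert, swap_apply_of_ne_of_ne, hexagonCochain]
  apply Additive.ofMul.injective
  simp only [ofMul_mul, ofMul_inv, ofMul_div]
  abel

variable [CommGroup X]

theorem d2_hexagonCochain (w : X → X → X → M) (a b c d : X) :
    d2 (hexagonCochain w a) b c d =
      d3 w b a c d * d3 w b c d a / (d3 w a b c d * d3 w b c a d) := by
  simp only [d2, d3, hexagonCochain, mul_comm b a, mul_comm c a, mul_comm d a]
  apply Additive.ofMul.injective
  simp only [ofMul_mul, ofMul_inv, ofMul_div]
  abel

theorem d2_mul_d2_eq_one_of_symm {F : X → X → M} (hF : ∀ x y, F x y = F y x) (u v : X) :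
    d2 F u u v * d2 F v u u = 1 := by
  simp only [d2, hF v, hF (u * v) u, mul_comm v u]
  apply Additive.ofMul.injective
  simp only [ofMul_mul, ofMul_inv, ofMul_one]
  abel

theorem d3_eq_of_hexagonCochain_symm {w : X → X → X → M}
    (hw : ∀ a b c, hexagonCochain w a b c = hexagonCochain w a c b) (u v : X) :
    d3 w u v u v = d3 w v u v u := by
  have h := d2_mul_d2_eq_one_of_symm (hw v) u v
  rw [d2_hexagonCochain, d2_hexagonCochain] at h
  apply Additive.ofMul.injective
  have h' := congrArg Additive.ofMul h
  simp only [ofMul_mul, ofMul_div, ofMul_one] at h'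
  linear_combination (norm := abel) h'

theorem d2_hexagonCochain_eq_one {w : X → X → X → M}
    (hleft : ∀ a b c d, d3 w a b c d = d3 w b a c d)
    (hright : ∀ a b c d, d3 w a b c d = d3 w a b d c) (a b c d : X) :
    d2 (hexagonCochain w a) b c d = 1 := by
  rw [d2_hexagonCochain, ← hleft, ← hright b c a d, div_self']

end Hexagon

theorem cc_eq_of_cc_self_eq {α : Type*} {q : α → ℂˣ} {x y : α} (h : cc q x x = cc q y y) :
    (∀ z, cc q x z = cc q y z) ∧ ∀ z, cc q z x = cc q z y := by
  have hxy : q x = -1 ↔ q y = -1 := by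
    by_cases hx : q x = -1 <;> by_cases hy : q y = -1 <;> simp_all [cc]
  simp only [cc, hxy, and_comm, implies_true, and_self]

theorem statement6_general (q : A → ℂˣ)
    (l : (A →* ℂˣ) → (A →* ℂˣ) → A)
    (w : (A →* ℂˣ) → (A →* ℂˣ) → (A →* ℂˣ) → ℂˣ)
    (hz : IsAssocZesting q l w) :
    (∃ t : (A →* ℂˣ) → (A →* ℂˣ) → ℂˣ, ∀ χ₁ χ₂ χ₃,
        w χ₁ χ₂ χ₃ * w χ₂ χ₃ χ₁ / w χ₂ χ₁ χ₃ = t χ₁ χ₂ * t χ₁ χ₃ / t χ₁ (χ₂ * χ₃)) ↔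
      (∀ χ₁ χ₂ χ₃ : A →* ℂˣ,
        ∏ σ : Equiv.Perm (Fin 3),
          (w (![χ₁, χ₂, χ₃] (σ 0)) (![χ₁, χ₂, χ₃] (σ 1)) (![χ₁, χ₂, χ₃] (σ 2))) ^
            ((Equiv.Perm.sign σ : ℤˣ) : ℤ) = 1) := by
  simp only [prod_perm_fin_three_zpow_sign, div_eq_one]
  constructor
  · rintro ⟨t, ht⟩ a b c
    rw [hexagonCochain, ht, hexagonCochain, ht, mul_comm c b, mul_comm (t a b)]
  · intro hsymm
    have hcc (u v) : cc q (l u v) (l u v) = cc q (l v u) (l v u) := by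
      simpa only [hz.2.2] using d3_eq_of_hexagonCochain_symm hsymm u v
    have hcoc := d2_hexagonCochain_eq_one (w := w)
      (fun a b c d => by simp only [hz.2.2, (cc_eq_of_cc_self_eq (hcc a b)).1])
      (fun a b c d => by simp only [hz.2.2, (cc_eq_of_cc_self_eq (hcc c d)).2])
    choose t ht using fun a => exists_coboundary_eq_of_symm (hsymm a) (hcoc a)
    exact ⟨t, ht⟩

/-- For an associative zesting datum `(λ,ω)` of a pre-metric
group `(A,q)`, there exists `t ∈ C²(Â,ℂˣ)` satisfying (BZ2) if and only if
`∏_{σ ∈ S₃} ω(χ_{σ(1)},χ_{σ(2)},χ_{σ(3)})^{sgn(σ)} = 1` for all `χ₁,χ₂,χ₃ ∈ Â`. -/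
theorem statement6 [Finite A] (q : A → ℂˣ) (hq : IsPreMetric q)
    (l : (A →* ℂˣ) → (A →* ℂˣ) → A)
    (w : (A →* ℂˣ) → (A →* ℂˣ) → (A →* ℂˣ) → ℂˣ)
    (hz : IsAssocZesting q l w) :
    (∃ t : (A →* ℂˣ) → (A →* ℂˣ) → ℂˣ, ∀ χ₁ χ₂ χ₃,
        w χ₁ χ₂ χ₃ * w χ₂ χ₃ χ₁ / w χ₂ χ₁ χ₃ = t χ₁ χ₂ * t χ₁ χ₃ / t χ₁ (χ₂ * χ₃)) ↔
      (∀ χ₁ χ₂ χ₃ : A →* ℂˣ,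
        ∏ σ : Equiv.Perm (Fin 3),
          (w (![χ₁, χ₂, χ₃] (σ 0)) (![χ₁, χ₂, χ₃] (σ 1)) (![χ₁, χ₂, χ₃] (σ 2))) ^
            ((Equiv.Perm.sign σ : ℤˣ) : ℤ) = 1) :=
  statement6_general q l w hz

end Zesting
end

section
/- Let (A,q) be a pre-metric group and (λ,ω,t) a braided zesting datum of (A,q). (i) If f, f' : Â → ℂˣ are such that both (λ,ω,t,f) and (λ,ω,t,f') are ribbon zesting data, then the map χ ↦ f(χ)/f'(χ) is a group homomorphism Â → {±1}. (ii) Conversely, if (λ,ω,t,f) is a ribbon zesting datum and χ₀ : Â → {±1} is any group homomorphism, then (λ,ω,t, f·χ₀) is also a ribbon zesting datum. Hence the set of ribbon zesting data extending a fixed braided zesting datum, if nonempty, is a torsor over Hom(Â, {±1}). -/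
/-!
Both ribbon equations pin `f` down up to data depending only on `(λ, ω, t)`: the first fixes
`f (χ₁ χ₂) / (f χ₁ f χ₂)` and the second fixes `f χ / f χ⁻¹`. Hence the ratio `g = f / f'` of two
solutions is a character of `Â` with `g χ = g χ⁻¹ = (g χ)⁻¹`, so `g χ = ±1`; conversely a
`±1`-valued character changes neither quantity.
-/

lemma Units.eq_one_or_eq_neg_one_of_sq_eq_one {R : Type*} [Ring R] [NoZeroDivisors R] {u : Rˣ}
    (h : u ^ 2 = 1) : u = 1 ∨ u = -1 := by
  simpa only [Units.ext_iff, Units.val_pow_eq_pow_val, Units.val_one, Units.val_neg,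
    sq_eq_one_iff] using h

lemma Units.inv_eq_self_of_eq_one_or_eq_neg_one {R : Type*} [Monoid R] [HasDistribNeg R]
    {u : Rˣ} (h : u = 1 ∨ u = -1) : u⁻¹ = u := by
  rcases h with rfl | rfl <;> simp

section TwistedMultiplicative

variable {G M : Type*} [Group G] [CommGroup M]

lemma div_map_mul_of_twisted_map_mul {f f' : G → M} {a b : G → G → M}
    (hf : ∀ x y, f (x * y) * a x y = f x * f y * b x y)
    (hf' : ∀ x y, f' (x * y) * a x y = f' x * f' y * b x y) (x y : G) :
    f (x * y) / f' (x * y) = f x / f' x * (f y / f' y) := by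
  rw [← mul_div_mul_right_eq_div _ _ (a x y), hf, hf', mul_div_mul_right_eq_div,
    mul_div_mul_comm]

lemma twisted_map_mul_mul_monoidHom {f : G → M} {a b : G → G → M}
    (hf : ∀ x y, f (x * y) * a x y = f x * f y * b x y) (χ : G →* M) (x y : G) :
    f (x * y) * χ (x * y) * a x y = f x * χ x * (f y * χ y) * b x y := by
  rw [mul_right_comm, hf, map_mul]
  ac_rfl

lemma div_map_inv_eq_of_div_map_inv_eq {f f' : G → M} {c : G → M}
    (hf : ∀ x, f x / f x⁻¹ = c x) (hf' : ∀ x, f' x / f' x⁻¹ = c x) (x : G) :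
    f x / f' x = f x⁻¹ / f' x⁻¹ := by
  rw [← div_eq_one, div_div_div_comm, hf, hf', div_self']

lemma div_map_inv_mul_monoidHom {f : G → M} {c : G → M} (hf : ∀ x, f x / f x⁻¹ = c x)
    {χ : G →* M} (hχ : ∀ x, χ x⁻¹ = χ x) (x : G) :
    f x * χ x / (f x⁻¹ * χ x⁻¹) = c x := by
  rw [hχ, mul_div_mul_right_eq_div, hf]

lemma MonoidHom.sq_eq_one_of_map_inv_eq (g : G →* M) {x : G} (h : g x = g x⁻¹) :
    g x ^ 2 = 1 := by
  calc g x ^ 2 = g x * g x⁻¹ := by rw [sq, ← h]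
    _ = 1 := by rw [← map_mul, mul_inv_cancel, map_one]

end TwistedMultiplicative

namespace Zesting

variable {A : Type*} [CommGroup A]

/-- A braided zesting datum of `(A,q)`. -/
def IsBraidedZesting (q : A → ℂˣ) (l : (A →* ℂˣ) → (A →* ℂˣ) → A)
    (w : (A →* ℂˣ) → (A →* ℂˣ) → (A →* ℂˣ) → ℂˣ)
    (t : (A →* ℂˣ) → (A →* ℂˣ) → ℂˣ) : Prop :=
  IsAssocZesting q l w ∧
  (∀ χ₁ χ₂, l χ₁ χ₂ = l χ₂ χ₁) ∧
  (∀ χ₁ χ₂ χ₃,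
    w χ₁ χ₂ χ₃ * w χ₂ χ₃ χ₁ / w χ₂ χ₁ χ₃ = t χ₁ χ₂ * t χ₁ χ₃ / t χ₁ (χ₂ * χ₃)) ∧
  (∀ χ₁ χ₂ χ₃,
    χ₃ (l χ₁ χ₂) =
      (w χ₁ χ₂ χ₃ * w χ₃ χ₁ χ₂ / w χ₁ χ₃ χ₂) * (t χ₁ χ₃ * t χ₂ χ₃ / t (χ₁ * χ₂) χ₃))

/-- A ribbon zesting datum of `(A,q)`: a braided zesting datum together with
`f : Â → ℂˣ` satisfying the two ribbon equations. -/
def IsRibbonZesting (q : A → ℂˣ) (l : (A →* ℂˣ) → (A →* ℂˣ) → A)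
    (w : (A →* ℂˣ) → (A →* ℂˣ) → (A →* ℂˣ) → ℂˣ)
    (t : (A →* ℂˣ) → (A →* ℂˣ) → ℂˣ) (f : (A →* ℂˣ) → ℂˣ) : Prop :=
  IsBraidedZesting q l w t ∧
  (∀ χ₁ χ₂,
    f (χ₁ * χ₂) * (χ₁ * χ₂) (l χ₁ χ₂) * q (l χ₁ χ₂) =
      f χ₁ * f χ₂ * (t χ₁ χ₂ / t χ₂ χ₁)) ∧
  (∀ χ, f χ / f χ⁻¹ = q (l χ χ⁻¹) * χ (l χ χ⁻¹))

lemma IsRibbonZesting.twisted_map_mul {q : A → ℂˣ} {l : (A →* ℂˣ) → (A →* ℂˣ) → A}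
    {w : (A →* ℂˣ) → (A →* ℂˣ) → (A →* ℂˣ) → ℂˣ} {t : (A →* ℂˣ) → (A →* ℂˣ) → ℂˣ}
    {f : (A →* ℂˣ) → ℂˣ} (hf : IsRibbonZesting q l w t f) (χ₁ χ₂ : A →* ℂˣ) :
    f (χ₁ * χ₂) * ((χ₁ * χ₂) (l χ₁ χ₂) * q (l χ₁ χ₂)) =
      f χ₁ * f χ₂ * (t χ₁ χ₂ / t χ₂ χ₁) :=
  (mul_assoc _ _ _).symm.trans (hf.2.1 χ₁ χ₂)

theorem statement9_general (q : A → ℂˣ)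
    (l : (A →* ℂˣ) → (A →* ℂˣ) → A)
    (w : (A →* ℂˣ) → (A →* ℂˣ) → (A →* ℂˣ) → ℂˣ)
    (t : (A →* ℂˣ) → (A →* ℂˣ) → ℂˣ) :
    (∀ f f' : (A →* ℂˣ) → ℂˣ,
      IsRibbonZesting q l w t f → IsRibbonZesting q l w t f' →
        ∃ h : (A →* ℂˣ) →* ℂˣ,
          (∀ χ, h χ = f χ / f' χ) ∧ (∀ χ, h χ = 1 ∨ h χ = -1)) ∧
    (∀ (f : (A →* ℂˣ) → ℂˣ) (χ₀ : (A →* ℂˣ) →* ℂˣ),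
      IsRibbonZesting q l w t f → (∀ χ, χ₀ χ = 1 ∨ χ₀ χ = -1) →
        IsRibbonZesting q l w t (fun χ => f χ * χ₀ χ)) := by
  constructor
  · intro f f' hf hf'
    let g : (A →* ℂˣ) →* ℂˣ := MonoidHom.mk' (fun χ => f χ / f' χ)
      (div_map_mul_of_twisted_map_mul hf.twisted_map_mul hf'.twisted_map_mul)
    refine ⟨g, fun _ => rfl, fun χ => ?_⟩
    exact Units.eq_one_or_eq_neg_one_of_sq_eq_one <|
      g.sq_eq_one_of_map_inv_eq (div_map_inv_eq_of_div_map_inv_eq hf.2.2 hf'.2.2 χ)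
  · intro f χ₀ hf hχ₀
    have hχ₀_inv (χ : A →* ℂˣ) : χ₀ χ⁻¹ = χ₀ χ := by
      rw [map_inv χ₀ χ, Units.inv_eq_self_of_eq_one_or_eq_neg_one (hχ₀ χ)]
    refine ⟨hf.1, fun χ₁ χ₂ => ?_, div_map_inv_mul_monoidHom hf.2.2 hχ₀_inv⟩
    simpa only [mul_assoc] using twisted_map_mul_mul_monoidHom hf.twisted_map_mul χ₀ χ₁ χ₂

/-- (i) The ratio of two ribbon structures on a fixed braided
zesting datum is a homomorphism `Â → {±1}`; (ii) twisting a ribbon structure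
by any homomorphism `Â → {±1}` gives another ribbon structure. Hence the set
of ribbon zesting data extending a fixed braided zesting datum, if nonempty,
is a torsor over `Hom(Â, {±1})`. -/
theorem statement9 [Finite A] (q : A → ℂˣ) (hq : IsPreMetric q)
    (l : (A →* ℂˣ) → (A →* ℂˣ) → A)
    (w : (A →* ℂˣ) → (A →* ℂˣ) → (A →* ℂˣ) → ℂˣ)
    (t : (A →* ℂˣ) → (A →* ℂˣ) → ℂˣ)
    (hbz : IsBraidedZesting q l w t) :
    (∀ f f' : (A →* ℂˣ) → ℂˣ,
      IsRibbonZesting q l w t f → IsRibbonZesting q l w t f' →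
        ∃ h : (A →* ℂˣ) →* ℂˣ,
          (∀ χ, h χ = f χ / f' χ) ∧ (∀ χ, h χ = 1 ∨ h χ = -1)) ∧
    (∀ (f : (A →* ℂˣ) → ℂˣ) (χ₀ : (A →* ℂˣ) →* ℂˣ),
      IsRibbonZesting q l w t f → (∀ χ, χ₀ χ = 1 ∨ χ₀ χ = -1) →
        IsRibbonZesting q l w t (fun χ => f χ * χ₀ χ)) :=
  statement9_general q l w t

end Zesting
end

section
/- Let A = ℤ/2 with q(0) = 1 and q(f) = −1 for the nonzero element f, so that A₀ = A and c(f,f) = −1. Identify Â with ℤ/2 via the pairing ⟨x,y⟩ = (−1)^{xy} (representatives in {0,1}). Then the triple given by λ(x,y) = xy·f ∈ A, ω(x,y,z) = i^{xyz}, and t(x,y) = e^{iπ xy/4} is a braided zesting datum of (A,q); i.e. λ is a symmetric 2-cocycle with values in A₀, d³(ω) = λ ∧_c λ, and equations (BZ2) and (BZ3) hold. -/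
namespace Zesting

/-- The quadratic form: `q(0) = 1`, `q(f) = −1`. -/
noncomputable def q2 : ZMod 2 → ℂˣ := fun x => if x = 0 then 1 else -1

/-- The symmetric bicharacter `c(x,y) = (−1)^{q̂(x)q̂(y)}` on `A₀ = A`. -/
noncomputable def cc2 (x y : ZMod 2) : ℂˣ := if q2 x = -1 ∧ q2 y = -1 then -1 else 1

/-- The pairing `⟨x,y⟩ = (−1)^{x̄ȳ}` identifying `Â` with `ℤ/2`. -/
noncomputable def pa2 (x y : ZMod 2) : ℂˣ := (-1 : ℂˣ) ^ (x.val * y.val)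

/-- `λ(x,y) = xy·f`. -/
def lam2 : ZMod 2 → ZMod 2 → ZMod 2 := fun x y => x * y

/-- `ω(x,y,z) = i^{x̄ȳz̄}`. -/
noncomputable def w2 : ZMod 2 → ZMod 2 → ZMod 2 → ℂˣ :=
  fun x y z => (Units.mk0 Complex.I Complex.I_ne_zero) ^ (x.val * y.val * z.val)

/-- `t(x,y) = e^{iπ x̄ȳ/4}`. -/
noncomputable def t2 : ZMod 2 → ZMod 2 → ℂˣ :=
  fun x y =>
    (Units.mk0 (Complex.exp (Real.pi * Complex.I / 4)) (Complex.exp_ne_zero _)) ^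
      (x.val * y.val)

theorem zpow_eq_zpow_of_modEq {G : Type*} [Group G] {g : G} {n : ℤ} (hg : g ^ n = 1)
    {a b : ℤ} (h : a ≡ b [ZMOD n]) : g ^ a = g ^ b := by
  rw [zpow_eq_zpow_emod a hg, zpow_eq_zpow_emod b hg, h]

theorem zmod_two_eq_zero_or_one (x : ZMod 2) : x = 0 ∨ x = 1 := by
  revert x
  decide

/-- `ζ = e^{iπ/4}`. Every structure constant of the datum is `ζ` raised to a polynomial in the
`{0,1}`-representatives, so each defining identity is a congruence of exponents mod 8, which is
checked over the finitely many arguments. -/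
noncomputable def ζ8 : ℂˣ :=
  Units.mk0 (Complex.exp (Real.pi * Complex.I / 4)) (Complex.exp_ne_zero _)

theorem ζ8_sq : ζ8 ^ 2 = Units.mk0 Complex.I Complex.I_ne_zero := by
  ext
  rw [Units.val_pow_eq_pow_val, ζ8, Units.val_mk0, Units.val_mk0, ← Complex.exp_nat_mul]
  convert Complex.exp_pi_div_two_mul_I using 2
  push_cast
  ring

theorem ζ8_pow_four : ζ8 ^ 4 = -1 := by
  ext
  rw [show 4 = 2 * 2 from rfl, pow_mul, ζ8_sq]
  simp

theorem ζ8_zpow_eight : ζ8 ^ (8 : ℤ) = 1 := by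
  rw [show (8 : ℤ) = (4 : ℕ) * 2 by rfl, zpow_mul, zpow_natCast, ζ8_pow_four]
  simp

theorem q2_eq (x : ZMod 2) : q2 x = ζ8 ^ (4 * x.val : ℤ) := by
  rcases zmod_two_eq_zero_or_one x with rfl | rfl <;> simp [q2, ZMod.val_one, ζ8_pow_four]

theorem cc2_eq (x y : ZMod 2) : cc2 x y = ζ8 ^ (4 * x.val * y.val : ℤ) := by
  rcases zmod_two_eq_zero_or_one x with rfl | rfl <;>
    rcases zmod_two_eq_zero_or_one y with rfl | rfl <;>
    simp [cc2, q2, ZMod.val_one, ζ8_pow_four]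

theorem pa2_eq (x y : ZMod 2) : pa2 x y = ζ8 ^ (4 * x.val * y.val : ℤ) := by
  rw [pa2, ← ζ8_pow_four, ← pow_mul]
  norm_cast
  ring_nf

theorem w2_eq (x y z : ZMod 2) : w2 x y z = ζ8 ^ (2 * x.val * y.val * z.val : ℤ) := by
  rw [w2, ← ζ8_sq, ← pow_mul]
  norm_cast
  ring_nf

theorem t2_eq (x y : ZMod 2) : t2 x y = ζ8 ^ (x.val * y.val : ℤ) := by
  norm_cast

theorem q2_add (x y : ZMod 2) : q2 (x + y) = q2 x * q2 y := by
  simp only [q2_eq, ← zpow_add]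
  apply zpow_eq_zpow_of_modEq ζ8_zpow_eight
  revert x y
  decide

theorem lam2_cocycle (x y z : ZMod 2) :
    lam2 y z - lam2 (x + y) z + lam2 x (y + z) - lam2 x y = 0 := by
  simp only [lam2]
  ring

theorem w2_coboundary (x y z w : ZMod 2) :
    w2 y z w * (w2 (x + y) z w)⁻¹ * w2 x (y + z) w * (w2 x y (z + w))⁻¹ * w2 x y z =
      cc2 (lam2 x y) (lam2 z w) := by
  simp only [w2_eq, cc2_eq, ← zpow_neg, ← zpow_add]
  apply zpow_eq_zpow_of_modEq ζ8_zpow_eight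
  revert x y z w
  decide

theorem w2_t2_bz2 (x y z : ZMod 2) :
    w2 x y z * w2 y z x / w2 y x z = t2 x y * t2 x z / t2 x (y + z) := by
  simp only [w2_eq, t2_eq, div_eq_mul_inv, ← zpow_neg, ← zpow_add]
  apply zpow_eq_zpow_of_modEq ζ8_zpow_eight
  revert x y z
  decide

theorem w2_t2_bz3 (x y z : ZMod 2) :
    pa2 z (lam2 x y) =
      (w2 x y z * w2 z x y / w2 x z y) * (t2 x z * t2 y z / t2 (x + y) z) := by
  simp only [pa2_eq, w2_eq, t2_eq, div_eq_mul_inv, ← zpow_neg, ← zpow_add]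
  apply zpow_eq_zpow_of_modEq ζ8_zpow_eight
  revert x y z
  decide

/-- `(λ, ω, t)` is a braided zesting datum of `(ℤ/2, q)`:
`λ` is symmetric, valued in `A₀`, a 2-cocycle, `d³(ω) = λ ∧_c λ`, and the
equations (BZ2) and (BZ3) hold. -/
theorem statement10 :
    q2 0 = 1 ∧ q2 1 = -1 ∧
    (∀ x y, lam2 x y = lam2 y x) ∧
    (∀ x y z, q2 (lam2 x y + z) = q2 (lam2 x y) * q2 z) ∧
    (∀ x y z, lam2 y z - lam2 (x + y) z + lam2 x (y + z) - lam2 x y = 0) ∧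
    (∀ x y z w,
      w2 y z w * (w2 (x + y) z w)⁻¹ * w2 x (y + z) w * (w2 x y (z + w))⁻¹ * w2 x y z =
        cc2 (lam2 x y) (lam2 z w)) ∧
    (∀ x y z,
      w2 x y z * w2 y z x / w2 y x z = t2 x y * t2 x z / t2 x (y + z)) ∧
    (∀ x y z,
      pa2 z (lam2 x y) =
        (w2 x y z * w2 z x y / w2 x z y) * (t2 x z * t2 y z / t2 (x + y) z)) := by
  exact ⟨by simp [q2], by simp [q2], mul_comm, fun x y z => q2_add (lam2 x y) z, lam2_cocycle,
    w2_coboundary, w2_t2_bz2, w2_t2_bz3⟩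

end Zesting
end

section
/- Let A be a finite abelian group. A 2-cocycle f ∈ Z²(A, ℂˣ) (trivial action) is a 2-coboundary if and only if f is symmetric, i.e. f(x,y) = f(y,x) for all x,y ∈ A. -/
/-!
A symmetric 2-cocycle `f` on an abelian group `A` defines an abelian extension
`1 → ℂˣ → E → A → 1`, namely `A × ℂˣ` with `(a, s) * (b, t) = (a * b, s * t * f a b)`.
Since `ℂˣ` is divisible, it is an injective `ℤ`-module, so the inclusion `ℂˣ → E` has a
retraction `r`; then `κ a := r (a, 1)` satisfies `κ x * κ y = f x y * κ (x * y)`, i.e. `f` is a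
coboundary. Conversely every coboundary is visibly symmetric.
-/

noncomputable instance IsAlgClosed.rootableByUnits {K : Type*} [Field K] [IsAlgClosed K] :
    RootableBy Kˣ ℕ :=
  rootableByOfPowLeftSurj _ _ fun {n} hn u => by
    obtain ⟨z, hz⟩ := IsAlgClosed.exists_pow_nat_eq (u : K) (Nat.pos_of_ne_zero hn)
    have hz0 : z ≠ 0 := by
      rintro rfl
      exact u.ne_zero (hz ▸ zero_pow hn)
    exact ⟨Units.mk0 z hz0, Units.ext (by simpa using hz)⟩

noncomputable instance IsAlgClosed.rootableByUnitsInt {K : Type*} [Field K] [IsAlgClosed K] :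
    RootableBy Kˣ ℤ :=
  Group.rootableByIntOfRootableByNat _

/-- Baer's criterion: a divisible abelian group is an injective `ℤ`-module. -/
theorem MonoidHom.exists_retraction_of_injective {M E : Type*} [CommGroup M] [CommGroup E]
    [RootableBy M ℤ] (i : M →* E) (hi : Function.Injective i) :
    ∃ r : E →* M, r.comp i = MonoidHom.id M := by
  let : DivisibleBy (Additive M) ℤ :=
    divisibleByOfSMulRightSurj _ _ fun hn => RootableBy.surjective_pow M ℤ hn
  obtain ⟨r, hr⟩ := (Module.Baer.of_divisible (Additive M)).extension_property_addMonoidHom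
    i.toAdditive hi (AddMonoidHom.id _)
  exact ⟨AddMonoidHom.toMultiplicative r, congrArg AddMonoidHom.toMultiplicative hr⟩

namespace Zesting

structure TwoCocycle (A M : Type*) [Group A] [CommGroup M] where
  toFun : A → A → M
  map_mul_mul : ∀ x y z, toFun (x * y) z * toFun x y = toFun y z * toFun x (y * z)

namespace TwoCocycle

variable {A M : Type*} [Group A] [CommGroup M] (f : TwoCocycle A M)

instance : CoeFun (TwoCocycle A M) fun _ => A → A → M := ⟨toFun⟩

theorem apply_one_left (x : A) : f 1 x = f 1 1 := by
  simpa using (f.map_mul_mul 1 1 x).symm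

/-- Since `f` need not be normalized, the identity of this extension is `⟨1, (f 1 1)⁻¹⟩`, and `M`
embeds as the fibre over `1` shifted by `(f 1 1)⁻¹`. -/
@[ext]
structure Ext (_ : TwoCocycle A M) where
  base : A
  fiber : M

instance : Mul f.Ext := ⟨fun ⟨a, s⟩ ⟨b, t⟩ => ⟨a * b, s * t * f a b⟩⟩
instance : One f.Ext := ⟨⟨1, (f 1 1)⁻¹⟩⟩
instance : Inv f.Ext := ⟨fun ⟨a, s⟩ => ⟨a⁻¹, s⁻¹ * (f a⁻¹ a)⁻¹ * (f 1 1)⁻¹⟩⟩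

instance : Group f.Ext :=
  Group.ofLeftAxioms
    (fun ⟨a, s⟩ ⟨b, t⟩ ⟨c, u⟩ => Ext.ext (mul_assoc a b c) <| by
      show s * t * f a b * u * f (a * b) c = s * (t * u * f b c) * f a (b * c)
      calc _ = s * t * u * (f (a * b) c * f a b) := by ac_rfl
        _ = _ := by rw [f.map_mul_mul]; ac_rfl)
    (fun ⟨a, s⟩ => Ext.ext (one_mul a) <| by
      show (f 1 1)⁻¹ * s * f 1 a = s
      rw [f.apply_one_left a, mul_comm _ s, inv_mul_cancel_right])
    (fun ⟨a, s⟩ => Ext.ext (inv_mul_cancel a) <| by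
      show s⁻¹ * (f a⁻¹ a)⁻¹ * (f 1 1)⁻¹ * s * f a⁻¹ a = (f 1 1)⁻¹
      simp [mul_comm, mul_assoc])

def incl : M →* f.Ext where
  toFun s := ⟨1, s * (f 1 1)⁻¹⟩
  map_one' := Ext.ext rfl (one_mul _)
  map_mul' s t := Ext.ext (one_mul 1).symm <| by
    show s * t * (f 1 1)⁻¹ = s * (f 1 1)⁻¹ * (t * (f 1 1)⁻¹) * f 1 1
    simp [mul_comm, mul_assoc, mul_left_comm]

theorem incl_injective : Function.Injective f.incl :=
  fun _ _ h => mul_right_cancel (congrArg Ext.fiber h)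

theorem incl_mul_mk_one (x y : A) :
    f.incl (f x y) * ⟨x * y, 1⟩ = (⟨x, 1⟩ * ⟨y, 1⟩ : f.Ext) :=
  Ext.ext (one_mul _) <| by
    show f x y * (f 1 1)⁻¹ * 1 * f 1 (x * y) = 1 * 1 * f x y
    rw [f.apply_one_left (x * y), mul_one, inv_mul_cancel_right, one_mul, one_mul]

section CommGroup

variable {A M : Type*} [CommGroup A] [CommGroup M] (f : TwoCocycle A M)

abbrev extCommGroup (hsymm : ∀ x y, f x y = f y x) : CommGroup f.Ext where
  mul_comm p q := Ext.ext (mul_comm p.base q.base) <| by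
    show p.fiber * q.fiber * f p.base q.base = q.fiber * p.fiber * f q.base p.base
    rw [mul_comm p.fiber, hsymm]

theorem exists_coboundary_of_symm [RootableBy M ℤ] (hsymm : ∀ x y, f x y = f y x) :
    ∃ κ : A → M, ∀ x y, f x y = κ y * (κ (x * y))⁻¹ * κ x := by
  let := f.extCommGroup hsymm
  obtain ⟨r, hr⟩ := f.incl.exists_retraction_of_injective f.incl_injective
  let κ : A → M := fun a => r ⟨a, 1⟩
  refine ⟨κ, fun x y => ?_⟩
  have h : f x y * κ (x * y) = κ x * κ y := by
    rw [← map_mul, ← f.incl_mul_mk_one, map_mul, ← MonoidHom.comp_apply, hr,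
      MonoidHom.id_apply]
  rw [eq_mul_inv_of_mul_eq h, mul_comm (κ x), mul_right_comm]

end CommGroup

end TwoCocycle

theorem statement11_general {A : Type*} [CommGroup A] (f : A → A → ℂˣ)
    (hf : ∀ x y z, f y z * (f (x * y) z)⁻¹ * f x (y * z) * (f x y)⁻¹ = 1) :
    (∃ κ : A → ℂˣ, ∀ x y, f x y = κ y * (κ (x * y))⁻¹ * κ x) ↔
      (∀ x y, f x y = f y x) := by
  refine ⟨fun ⟨κ, hκ⟩ x y => by rw [hκ, hκ, mul_comm y x]; ac_rfl, fun hsym => ?_⟩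
  have hcoc : ∀ x y z, f (x * y) z * f x y = f y z * f x (y * z) := fun x y z => by
    have h := hf x y z
    rw [mul_inv_eq_one, mul_right_comm, mul_inv_eq_iff_eq_mul] at h
    rw [h, mul_comm]
  exact TwoCocycle.exists_coboundary_of_symm ⟨f, hcoc⟩ hsym

theorem statement11 {A : Type*} [CommGroup A] [Finite A] (f : A → A → ℂˣ)
    (hf : ∀ x y z, f y z * (f (x * y) z)⁻¹ * f x (y * z) * (f x y)⁻¹ = 1) :
    (∃ κ : A → ℂˣ, ∀ x y, f x y = κ y * (κ (x * y))⁻¹ * κ x) ↔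
      (∀ x y, f x y = f y x) :=
  statement11_general f hf

end Zesting
end

section
/- Let K = ℤ/2 × ℤ/2 with the symmetric bicharacter c(x,y) = (−1)^{x₁y₁ + x₂y₂}. For m⃗ = (m₁,m₂), n⃗ = (n₁,n₂) ∈ K (coordinates represented in {0,1}) define λ_{m⃗,n⃗}(x,y) = (m₁x₁y₁ + n₁x₂y₂, m₂x₁y₁ + n₂x₂y₂) ∈ K and ω_{m⃗,n⃗}(x,y,z) = i^{(m₁+m₂)x₁y₁z₁ + (n₁+n₂)x₂y₂z₂ + (m₁n₁+m₂n₂)(x₁y₁z₂ + x₂y₂z₁)}, exponents computed with integer representatives in {0,1}. Then λ_{m⃗,n⃗} is a symmetric 2-cocycle in Z²(K, K) and d³(ω_{m⃗,n⃗}) = λ_{m⃗,n⃗} ∧_c λ_{m⃗,n⃗}; in particular every such λ_{m⃗,n⃗} admits an associative zesting datum, so the cup-square map ∪_c : H²_sym(K,K) → H⁴(K, ℂˣ) is trivial. -/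
/-!
Statement 13: for the Klein four-group `K` with the bicharacter
`c(x,y) = (−1)^{x₁y₁ + x₂y₂}`, each symmetric 2-cocycle `λ_{m⃗,n⃗}` admits an
associative zesting datum, witnessed by the explicit 3-cochain `ω_{m⃗,n⃗}`;
in particular the cup-square map `∪_c : H²_sym(K,K) → H⁴(K,ℂˣ)` is trivial.
-/

namespace Zesting

/-- The Klein four-group. -/
abbrev K := ZMod 2 × ZMod 2

/-- A fixed primitive fourth root of unity in `ℂˣ`. -/
noncomputable def iu : ℂˣ := Units.mk0 Complex.I Complex.I_ne_zero

/-- The symmetric bicharacter `c(x,y) = (−1)^{x₁y₁ + x₂y₂}`. -/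
noncomputable def cK (x y : K) : ℂˣ :=
  (-1 : ℂˣ) ^ (x.1.val * y.1.val + x.2.val * y.2.val)

/-- `λ_{m⃗,n⃗}(x,y) = (m₁x₁y₁ + n₁x₂y₂, m₂x₁y₁ + n₂x₂y₂)`. -/
def lamMN (m n : K) : K → K → K := fun x y =>
  (m.1 * x.1 * y.1 + n.1 * x.2 * y.2, m.2 * x.1 * y.1 + n.2 * x.2 * y.2)

/-- `ω_{m⃗,n⃗}(x,y,z) = i^{(m₁+m₂)x₁y₁z₁ + (n₁+n₂)x₂y₂z₂ + (m⃗·n⃗)(x₁y₁z₂ + x₂y₂z₁)}`,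
with exponents computed from integer representatives in `{0,1}`. -/
noncomputable def omegaMN (m n : K) : K → K → K → ℂˣ := fun x y z =>
  iu ^ ((m.1.val + m.2.val) * (x.1.val * y.1.val * z.1.val) +
        (n.1.val + n.2.val) * (x.2.val * y.2.val * z.2.val) +
        (m.1.val * n.1.val + m.2.val * n.2.val) *
          (x.1.val * y.1.val * z.2.val + x.2.val * y.2.val * z.1.val))


/-- The exponent in `omegaMN`. -/
def eMN (m n : K) (x y z : K) : ℕ :=
  (m.1.val + m.2.val) * (x.1.val * y.1.val * z.1.val) +
    (n.1.val + n.2.val) * (x.2.val * y.2.val * z.2.val) +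
    (m.1.val * n.1.val + m.2.val * n.2.val) *
      (x.1.val * y.1.val * z.2.val + x.2.val * y.2.val * z.1.val)

lemma iu_pow_four : iu ^ 4 = 1 := by
  ext
  simp [iu]

lemma iu_pow_mod (a : ℕ) : iu ^ a = iu ^ (a % 4) := by
  conv_lhs => rw [← Nat.div_add_mod a 4, pow_add, pow_mul, iu_pow_four, one_pow, one_mul]

lemma iu_inv_pow (b : ℕ) : (iu ^ b)⁻¹ = iu ^ (3 * b) := by
  apply inv_eq_of_mul_eq_one_right
  rw [← pow_add]
  have : b + 3 * b = 4 * b := by ring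
  rw [this, pow_mul, iu_pow_four, one_pow]

lemma cK_eq (x y : K) : cK x y = iu ^ (2 * (x.1.val * y.1.val + x.2.val * y.2.val)) := by
  have h : (-1 : ℂˣ) = iu ^ 2 := by
    ext
    simp [iu, Complex.I_sq]
  rw [cK, h, ← pow_mul]

lemma key_s13 (m n x y z w : K) :
    (eMN m n y z w + 3 * eMN m n (x + y) z w + eMN m n x (y + z) w +
        3 * eMN m n x y (z + w) + eMN m n x y z) % 4 =
      (2 * ((lamMN m n x y).1.val * (lamMN m n z w).1.val +
        (lamMN m n x y).2.val * (lamMN m n z w).2.val)) % 4 := by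
  revert m n x y z w
  decide

/-- `λ_{m⃗,n⃗}` is a symmetric 2-cocycle and
`d³(ω_{m⃗,n⃗}) = λ_{m⃗,n⃗} ∧_c λ_{m⃗,n⃗}`; in particular every `λ_{m⃗,n⃗}` admits an
associative zesting datum. -/
theorem statement13 (m n : K) :
    (∀ x y, lamMN m n x y = lamMN m n y x) ∧
    (∀ x y z,
      lamMN m n y z - lamMN m n (x + y) z + lamMN m n x (y + z) - lamMN m n x y = 0) ∧
    (∀ x y z w,
      omegaMN m n y z w * (omegaMN m n (x + y) z w)⁻¹ * omegaMN m n x (y + z) w *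
          (omegaMN m n x y (z + w))⁻¹ * omegaMN m n x y z =
        cK (lamMN m n x y) (lamMN m n z w)) := by
  refine ⟨?_, ?_, ?_⟩
  · revert m n; decide
  · revert m n; decide
  · intro x y z w
    show iu ^ eMN m n y z w * (iu ^ eMN m n (x + y) z w)⁻¹ * iu ^ eMN m n x (y + z) w *
        (iu ^ eMN m n x y (z + w))⁻¹ * iu ^ eMN m n x y z = _
    rw [cK_eq, iu_inv_pow, iu_inv_pow, ← pow_add, ← pow_add, ← pow_add, ← pow_add]
    rw [iu_pow_mod, iu_pow_mod (2 * _)]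
    congr 1
    have := key_s13 m n x y z w
    omega


end Zesting
end

section
/- Let K = ℤ/2 × ℤ/2 and define ω ∈ C³(K, ℂˣ) by ω(x,y,z) = i^{x₁ y₁ z₂}, where the coordinates are represented by integers in {0,1}. Then for all x, y, z, w ∈ K one has d³(ω)(x,y,z,w) = ω(y,z,w)·ω(xy,z,w)⁻¹·ω(x,yz,w)·ω(x,y,zw)⁻¹·ω(x,y,z) = (−1)^{x₁ y₁ z₂ w₂}. -/
/-!
Write `ω = ι ^ f` with `ι = i` of order four and `f(x,y,z) = x₁y₁z₂ ∈ ℤ`. Then `d³ω = ι ^ δf`,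
where `δf` is the alternating sum of the exponents. Since `(a + b).val = a.val + b.val - 2 a.val b.val`
on `ZMod 2`, expanding `δf` leaves exactly `2 x₁y₁z₂w₂`, and `ι² = -1`.
-/

namespace Zesting

/-- `ω(x,y,z) = i^{x₁y₁z₂}`, with coordinates represented in `{0,1}`. -/
noncomputable def w14 : K → K → K → ℂˣ := fun x y z =>
  (Units.mk0 Complex.I Complex.I_ne_zero) ^ (x.1.val * y.1.val * z.2.val)

theorem zmod_two_val_add (a b : ZMod 2) :
    ((a + b).val : ℤ) = a.val + b.val - 2 * a.val * b.val := by
  fin_cases a <;> fin_cases b <;> rfl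

def coboundary3 {G M : Type*} [Add G] [CommGroup M] (ω : G → G → G → M) (x y z w : G) : M :=
  ω y z w * (ω (x + y) z w)⁻¹ * ω x (y + z) w * (ω x y (z + w))⁻¹ * ω x y z

theorem coboundary3_zpow {G M : Type*} [Add G] [CommGroup M] (g : M) (f : G → G → G → ℤ)
    (x y z w : G) :
    coboundary3 (fun x y z => g ^ f x y z) x y z w =
      g ^ (f y z w - f (x + y) z w + f x (y + z) w - f x y (z + w) + f x y z) := by
  simp only [coboundary3, zpow_add, zpow_sub]

def w14Exponent (x y z : K) : ℤ := x.1.val * y.1.val * z.2.val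

theorem w14Exponent_coboundary (x y z w : K) :
    w14Exponent y z w - w14Exponent (x + y) z w + w14Exponent x (y + z) w
        - w14Exponent x y (z + w) + w14Exponent x y z =
      2 * (x.1.val * y.1.val * z.2.val * w.2.val : ℕ) := by
  simp only [w14Exponent, Prod.fst_add, Prod.snd_add, zmod_two_val_add]
  push_cast
  ring

theorem w14_eq_zpow :
    w14 = fun x y z => Units.mk0 Complex.I Complex.I_ne_zero ^ w14Exponent x y z := by
  funext x y z
  rw [w14, w14Exponent, ← zpow_natCast]
  push_cast
  rfl

theorem mk0_I_sq : Units.mk0 Complex.I Complex.I_ne_zero ^ 2 = -1 := by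
  ext
  simp

theorem statement14 : ∀ x y z w : K,
    w14 y z w * (w14 (x + y) z w)⁻¹ * w14 x (y + z) w * (w14 x y (z + w))⁻¹ *
        w14 x y z =
      (-1 : ℂˣ) ^ (x.1.val * y.1.val * z.2.val * w.2.val) := by
  intro x y z w
  change coboundary3 w14 x y z w = _
  rw [w14_eq_zpow, coboundary3_zpow, w14Exponent_coboundary, zpow_mul, zpow_ofNat, mk0_I_sq,
    zpow_natCast]

end Zesting
end
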